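/- arXiv:math/0511253 — 7 statements merged into one kernel-verified Lean document; each statement's English description precedes it below -/
import Mathlib

section
/- For every k ≥ 1, the function d(p,q) = k − l(p,q) is a metric on D(k): for all p, q, r ∈ D(k) one has l(p,q) ≤ k (so d(p,q) ≥ 0), d(p,q) = 0 if and only if p = q, d(p,q) = d(q,p), and d(p,q) ≤ d(p,r) + d(r,q). -/
open scoped BigOperators

/-- Non-crossing pair partitions of {1,…,2k}: fixed-point-free non-crossing
involutions of `Fin (2*k)`. -/
def NCPair (k : ℕ) : Type :=
  {p : Equiv.Perm (Fin (2 * k)) //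
    (∀ x, p (p x) = x) ∧ (∀ x, p x ≠ x) ∧
    ∀ a b c d : Fin (2 * k), a < b → b < c → c < d → p a = c → p b = d → False}

instance (k : ℕ) : Fintype (NCPair k) := by unfold NCPair; infer_instance

instance (k : ℕ) : DecidableEq (NCPair k) := by unfold NCPair; infer_instance

/-- `loops p q`: the number of loops obtained by closing the composed diagram,
i.e. the number of orbits of the subgroup generated by `p` and `q` on `Fin (2*k)`. -/
noncomputable def loops {k : ℕ} (p q : NCPair k) : ℕ :=
  Nat.card (MulAction.orbitRel.Quotient
    (↥(Subgroup.closure ({p.1, q.1} : Set (Equiv.Perm (Fin (2 * k)))))) (Fin (2 * k)))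

/-- The Gram matrix `G_{kn}(p,q) = n^{l(p,q)}`. -/
noncomputable def Gram (k n : ℕ) : Matrix (NCPair k) (NCPair k) ℝ :=
  fun p q => (n : ℝ) ^ loops p q

/-- The loop distance `d(p,q) = k - l(p,q)`. -/
noncomputable def loopDist {k : ℕ} (p q : NCPair k) : ℕ := k - loops p q

/-!
A pair partition `p` is a fixed-point-free involution, so the orbits of `⟨p⟩` are its `k` blocks
`{x, p x}` and `l(p, p) = k`. The orbit partition of `⟨p, q⟩` is coarser, whence `l(p, q) ≤ k`,
with equality only if it equals that of `⟨p⟩`, i.e. `q x ∈ {x, p x}` for all `x`, i.e. `q = p`.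

For the triangle inequality, the orbit partitions `a` of `⟨p, r⟩` and `b` of `⟨r, q⟩` both coarsen
the partition `s` of `⟨r⟩`, and their join coarsens that of `⟨p, q⟩`. The number of classes is
submodular: the space `V π` of functions constant on the classes of `π` has dimension the number
of classes, `V (a ⊔ b) = V a ⊓ V b` and `V a ⊔ V b ≤ V s`, so Grassmann's formula gives
`l(p, r) + l(r, q) ≤ l(r, r) + l(p, q)`.
-/

namespace Setoid

variable {X : Type*}

theorem surjective_quotientMap_of_le {s t : Setoid X} (h : s ≤ t) :
    Function.Surjective (Quotient.map' id h : Quotient s → Quotient t) := by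
  rintro ⟨x⟩
  exact ⟨Quotient.mk s x, rfl⟩

theorem card_quotient_le_of_le [Finite X] {s t : Setoid X} (h : s ≤ t) :
    Nat.card (Quotient t) ≤ Nat.card (Quotient s) :=
  Nat.card_le_card_of_surjective _ (surjective_quotientMap_of_le h)

theorem eq_of_le_of_card_quotient_eq [Finite X] {s t : Setoid X} (h : s ≤ t)
    (hcard : Nat.card (Quotient t) = Nat.card (Quotient s)) : s = t := by
  have hinj := ((surjective_quotientMap_of_le h).bijective_of_nat_card_le hcard.ge).1
  exact le_antisymm h fun x y hxy => Quotient.exact (hinj (Quotient.sound hxy : _))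

variable (K : Type*) [Field K]

def classFunctions (s : Setoid X) : Submodule K (X → K) :=
  LinearMap.range (LinearMap.funLeft K K (Quotient.mk s))

variable {K}

theorem mem_classFunctions {s : Setoid X} {f : X → K} :
    f ∈ classFunctions K s ↔ s ≤ ker f := by
  refine ⟨?_, fun h => ⟨Quotient.lift f h, rfl⟩⟩
  rintro ⟨g, rfl⟩ x y hxy
  exact congrArg g (Quotient.sound hxy)

theorem classFunctions_sup (s t : Setoid X) :
    classFunctions K (s ⊔ t) = classFunctions K s ⊓ classFunctions K t := by
  ext f
  simp only [Submodule.mem_inf, mem_classFunctions, sup_le_iff]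

theorem classFunctions_anti {s t : Setoid X} (h : s ≤ t) :
    classFunctions K t ≤ classFunctions K s := fun _ hf =>
  mem_classFunctions.2 (h.trans (mem_classFunctions.1 hf))

theorem finrank_classFunctions [Finite X] (s : Setoid X) :
    Module.finrank K (classFunctions K s) = Nat.card (Quotient s) := by
  have := Fintype.ofFinite (Quotient s)
  rw [classFunctions, LinearMap.finrank_range_of_inj
    (LinearMap.funLeft_injective_of_surjective K K _ Quotient.mk_surjective),
    Module.finrank_fintype_fun_eq_card, Nat.card_eq_fintype_card]

theorem card_quotient_add_card_quotient_le [Finite X] {s a b : Setoid X} (ha : s ≤ a)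
    (hb : s ≤ b) : Nat.card (Quotient a) + Nat.card (Quotient b) ≤
      Nat.card (Quotient s) + Nat.card (Quotient (a ⊔ b)) := by
  simp only [← finrank_classFunctions (K := ℚ)]
  rw [← Submodule.finrank_sup_add_finrank_inf_eq, classFunctions_sup]
  exact Nat.add_le_add_right (Submodule.finrank_mono
    (sup_le (classFunctions_anti ha) (classFunctions_anti hb))) _

end Setoid

namespace MulAction

variable {G α : Type*} [Group G] [MulAction G α]

theorem orbitRel_mono {H K : Subgroup G} (h : H ≤ K) : orbitRel H α ≤ orbitRel K α := by
  rintro _ y ⟨⟨g, hg⟩, rfl⟩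
  exact ⟨⟨g, h hg⟩, rfl⟩

theorem orbitRel_closure_le {S : Set G} {T : Setoid α} (hS : ∀ g ∈ S, ∀ x, T (g • x) x) :
    orbitRel (Subgroup.closure S) α ≤ T := by
  let H : Subgroup G :=
    { carrier := {g | ∀ x, T (g • x) x}
      mul_mem' := fun hg hh x => by rw [mul_smul]; exact T.trans (hg _) (hh x)
      one_mem' := fun x => by rw [one_smul]
      inv_mem' := fun {g} hg x => by simpa using T.symm (hg (g⁻¹ • x)) }
  rintro _ y ⟨⟨g, hg⟩, rfl⟩
  exact (Subgroup.closure_le H).2 hS hg y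

end MulAction

namespace Equiv.Perm

open MulAction

variable {α : Type*} {p : Perm α}

theorem mem_orbit_closure_singleton_iff (hp : Function.Involutive p) {x y : α} :
    x ∈ orbit (Subgroup.closure {p}) y ↔ x = y ∨ x = p y := by
  constructor
  · intro hxy
    have hle : orbitRel (Subgroup.closure {p}) α ≤ Setoid.ker fun z => s(z, p z) :=
      orbitRel_closure_le fun g hg z => by
        rw [Set.mem_singleton_iff.1 hg, Setoid.ker_def, Perm.smul_def, hp z, Sym2.eq_swap]
    have := hle hxy
    rw [Setoid.ker_def, Sym2.eq_iff] at this
    rcases this with ⟨rfl, -⟩ | ⟨rfl, -⟩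
    exacts [Or.inl rfl, Or.inr rfl]
  · rintro (rfl | rfl)
    · exact mem_orbit_self x
    · exact ⟨⟨p, Subgroup.subset_closure rfl⟩, rfl⟩

theorem orbit_closure_singleton (hp : Function.Involutive p) (y : α) :
    orbit (Subgroup.closure {p}) y = {y, p y} :=
  Set.ext fun _ => mem_orbit_closure_singleton_iff hp

theorem two_mul_card_orbits [Finite α] (hp : Function.Involutive p) (hfix : ∀ x, p x ≠ x) :
    2 * Nat.card (orbitRel.Quotient (Subgroup.closure {p}) α) = Nat.card α := by
  have := Fintype.ofFinite (orbitRel.Quotient (Subgroup.closure {p}) α)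
  rw [Nat.card_congr (selfEquivSigmaOrbits (Subgroup.closure {p}) α), Nat.card_sigma]
  simp_rw [orbit_closure_singleton hp, Nat.card_coe_set_eq, Set.ncard_pair (hfix _).symm]
  simp [mul_comm]

end Equiv.Perm

namespace NCPair

open MulAction Subgroup

variable {k : ℕ}

abbrev loopRel (p q : NCPair k) : Setoid (Fin (2 * k)) :=
  orbitRel (closure {p.1, q.1}) (Fin (2 * k))

theorem loops_eq_card (p q : NCPair k) : loops p q = Nat.card (Quotient (loopRel p q)) := rfl

theorem loopRel_apply_left (p q : NCPair k) (x : Fin (2 * k)) : loopRel p q (p.1 x) x :=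
  ⟨⟨p.1, subset_closure (by simp)⟩, rfl⟩

theorem loopRel_apply_right (p q : NCPair k) (x : Fin (2 * k)) : loopRel p q (q.1 x) x :=
  ⟨⟨q.1, subset_closure (by simp)⟩, rfl⟩

theorem loopRel_self_le_left (p q : NCPair k) : loopRel p p ≤ loopRel p q :=
  orbitRel_mono (closure_mono (by simp))

theorem loopRel_self_le_right (p q : NCPair k) : loopRel q q ≤ loopRel p q :=
  orbitRel_mono (closure_mono (by simp))

theorem loopRel_le_sup (p q r : NCPair k) : loopRel p q ≤ loopRel p r ⊔ loopRel r q :=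
  orbitRel_closure_le fun g hg x => by
    rcases hg with rfl | rfl
    · exact le_sup_left (b := loopRel r q) (loopRel_apply_left p r x)
    · exact le_sup_right (a := loopRel p r) (loopRel_apply_right r q x)

theorem loops_self (p : NCPair k) : loops p p = k := by
  have h := Equiv.Perm.two_mul_card_orbits p.2.1 p.2.2.1
  rw [Nat.card_fin] at h
  rw [loops, Set.pair_eq_singleton]
  omega

theorem loops_comm (p q : NCPair k) : loops p q = loops q p := by
  rw [loops, loops, Set.pair_comm]

theorem loops_le (p q : NCPair k) : loops p q ≤ k := by
  simpa only [← loops_eq_card, loops_self] using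
    Setoid.card_quotient_le_of_le (loopRel_self_le_left p q)

theorem eq_of_loops_eq {p q : NCPair k} (h : loops p q = k) : p = q := by
  have hrel : loopRel p p = loopRel p q :=
    Setoid.eq_of_le_of_card_quotient_eq (loopRel_self_le_left p q) (by
      rw [← loops_eq_card, ← loops_eq_card, h, loops_self])
  refine Subtype.ext (Equiv.ext fun x => ?_)
  have hqx : q.1 x ∈ orbit (closure {p.1}) x := by
    have := loopRel_apply_right p q x
    rwa [← hrel, loopRel, Set.pair_eq_singleton, orbitRel_apply] at this
  rcases (Equiv.Perm.mem_orbit_closure_singleton_iff p.2.1).1 hqx with hfix | hpx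
  · exact absurd hfix (q.2.2.1 x)
  · exact hpx.symm

theorem loops_add_loops_le (p q r : NCPair k) : loops p r + loops r q ≤ k + loops p q :=
  calc loops p r + loops r q
      ≤ Nat.card (Quotient (loopRel r r)) + Nat.card (Quotient (loopRel p r ⊔ loopRel r q)) :=
        Setoid.card_quotient_add_card_quotient_le (loopRel_self_le_right p r)
          (loopRel_self_le_left r q)
    _ ≤ k + loops p q := by
        rw [← loops_eq_card, loops_self]
        exact Nat.add_le_add_left (Setoid.card_quotient_le_of_le (loopRel_le_sup p q r)) k

end NCPair

theorem loopDist_is_metric_general (k : ℕ) (p q r : NCPair k) :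
    loops p q ≤ k ∧
    (loopDist p q = 0 ↔ p = q) ∧
    loopDist p q = loopDist q p ∧
    loopDist p q ≤ loopDist p r + loopDist r q := by
  have hpq := NCPair.loops_le p q
  have hpr := NCPair.loops_le p r
  have hrq := NCPair.loops_le r q
  have htri := NCPair.loops_add_loops_le p q r
  simp only [loopDist]
  refine ⟨hpq, ⟨fun h => NCPair.eq_of_loops_eq (by omega), ?_⟩, by rw [NCPair.loops_comm],
    by omega⟩
  rintro rfl
  rw [NCPair.loops_self, Nat.sub_self]

/-- For k ≥ 1, the loop distance d(p,q) = k − l(p,q) is a metric on D(k). -/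
theorem loopDist_is_metric (k : ℕ) (hk : 1 ≤ k) (p q r : NCPair k) :
    loops p q ≤ k ∧
    (loopDist p q = 0 ↔ p = q) ∧
    loopDist p q = loopDist q p ∧
    loopDist p q ≤ loopDist p r + loopDist r q :=
  loopDist_is_metric_general k p q r
end

section
/- For every k ≥ 1 and every integer n ≥ 2, the Gram matrix G_{kn}, i.e., the real symmetric matrix indexed by D(k) with entries G_{kn}(p,q) = n^{l(p,q)}, is positive definite; in particular it is invertible. -/
open scoped BigOperators

/-!
`G_{kn} = A Aᵀ`, where row `p` of the 0/1 matrix `A` indicates the colourings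
`Fin (2k) → Fin n` that are constant on the arcs of `p`: a colouring constant on the arcs of
both `p` and `q` is the same as a colouring of the loops of `(p, q)`. So it suffices that the
rows of `A` are linearly independent. Read a pairing `q` as a Dyck path and colour each point
by whether it opens or closes its `q`-arc, twisted by the parity of the point. If this colouring
is constant on the arcs of `p`, every arc of `p` joins a `q`-opener to a `q`-closer, and then the
Dyck path of `q` lies weakly below that of `p`, with equality only if `p = q`. Hence `A` is
triangular with respect to the area under the Dyck path.
-/

open Finset Matrix Equiv

section InvariantFunctions

variable {X Y : Type*}

lemma comp_eq_of_mem_closure {S : Set (Perm X)} {f : X → Y} (hS : ∀ σ ∈ S, f ∘ σ = f)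
    {g : Perm X} (hg : g ∈ Subgroup.closure S) : f ∘ g = f := by
  induction hg using Subgroup.closure_induction with
  | mem σ hσ => exact hS σ hσ
  | one => rfl
  | mul g h _ _ hg hh => rw [Perm.coe_mul, ← Function.comp_assoc, hg, hh]
  | inv g _ hg =>
    calc f ∘ ⇑g⁻¹ = (f ∘ g) ∘ ⇑g⁻¹ := by rw [hg]
      _ = f := by ext; simp

def invariantFunEquiv (S : Set (Perm X)) :
    {f : X → Y // ∀ σ ∈ S, f ∘ σ = f} ≃
      (MulAction.orbitRel.Quotient (Subgroup.closure S) X → Y) where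
  toFun f := Quotient.lift f.1 <| by
    rintro _ x ⟨g, rfl⟩
    exact congrFun (comp_eq_of_mem_closure f.2 g.2) x
  invFun F := ⟨F ∘ Quotient.mk _, fun σ hσ => funext fun x =>
    congrArg F (Quotient.sound ⟨⟨σ, Subgroup.subset_closure hσ⟩, rfl⟩)⟩
  left_inv _ := rfl
  right_inv F := funext fun c => Quotient.inductionOn c fun _ => rfl

lemma natCard_invariantFun [Finite X] (S : Set (Perm X)) :
    Nat.card {f : X → Y // ∀ σ ∈ S, f ∘ σ = f} =
      Nat.card Y ^ Nat.card (MulAction.orbitRel.Quotient (Subgroup.closure S) X) := by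
  rw [Nat.card_congr (invariantFunEquiv S), Nat.card_fun]

end InvariantFunctions

theorem Finset.sum_eq_sum_filter_apply_notMem {α M : Type*} [AddCommGroup M] {σ : α → α}
    (hσ : Function.Involutive σ) (hfix : ∀ z, σ z ≠ z) {f : α → M}
    (hf : ∀ z, f (σ z) = -f z) (T : Finset α) [DecidablePred (σ · ∈ T)] :
    ∑ z ∈ T, f z = ∑ z ∈ T with σ z ∉ T, f z := by
  rw [← sum_filter_add_sum_filter_not T (σ · ∈ T), add_eq_right]
  refine sum_involution (fun z _ => σ z) (fun z _ => by rw [hf, add_neg_cancel])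
    (fun z _ _ => hfix z) (fun z hz => ?_) (fun z _ => hσ z)
  rw [mem_filter] at hz ⊢
  rw [hσ z]
  exact ⟨hz.2, hz.1⟩

namespace NCPair

variable {k n : ℕ}

section Arcs

variable (p q : NCPair k)

lemma apply_apply (z : Fin (2 * k)) : p.1 (p.1 z) = z := p.2.1 z

lemma apply_ne (z : Fin (2 * k)) : p.1 z ≠ z := p.2.2.1 z

lemma apply_lt_iff_not_lt_apply (z : Fin (2 * k)) : p.1 z < z ↔ ¬ z < p.1 z :=
  ⟨lt_asymm, fun h => (not_lt.mp h).lt_of_ne (p.apply_ne z)⟩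

lemma apply_mem_Ioo {a z : Fin (2 * k)} (hz : z ∈ Ioo a (p.1 a)) :
    p.1 z ∈ Ioo a (p.1 a) := by
  obtain ⟨haz, hzb⟩ := mem_Ioo.mp hz
  have hne_a : p.1 z ≠ a := fun h => by rw [← h, p.apply_apply] at hzb; exact hzb.false
  have hne_b : p.1 z ≠ p.1 a := fun h => haz.ne' (p.1.injective h)
  refine mem_Ioo.mpr ⟨?_, ?_⟩
  · by_contra! h
    exact p.2.2.2 _ _ _ _ (h.lt_of_ne hne_a) haz hzb (p.apply_apply z) rfl
  · by_contra! h
    exact p.2.2.2 _ _ _ _ haz hzb (h.lt_of_ne hne_b.symm) rfl rfl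

-- The arc `(a, p a)` encloses the pairs of `p` inside it, so it spans an even number of points.
lemma even_apply_iff (z : Fin (2 * k)) : Even (p.1 z : ℕ) ↔ ¬ Even (z : ℕ) := by
  have key : ∀ a, a < p.1 a → (Even (p.1 a : ℕ) ↔ ¬ Even (a : ℕ)) := by
    intro a ha
    have hsum := sum_eq_sum_filter_apply_notMem p.2.1 p.2.2.1 (f := fun _ => (1 : ZMod 2))
      (fun _ => by decide) (Ioo a (p.1 a))
    rw [filter_false_of_mem fun z hz => not_not.mpr (p.apply_mem_Ioo hz)] at hsum
    simp only [sum_const, nsmul_eq_mul, mul_one, Fin.card_Ioo, card_empty, Nat.cast_zero,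
      ZMod.natCast_eq_zero_iff_even] at hsum
    simp only [Nat.even_iff] at hsum ⊢
    omega
  rcases lt_or_gt_of_ne (p.apply_ne z) with h | h
  · have := key (p.1 z) (by rwa [p.apply_apply])
    rw [p.apply_apply] at this
    tauto
  · exact key z h

lemma apply_eq_of_apply_apply_eq {z : Fin (2 * k)} (h : q.1 (p.1 z) = p.1 (p.1 z)) :
    q.1 z = p.1 z := by
  rw [p.apply_apply] at h
  calc q.1 z = q.1 (q.1 (p.1 z)) := by rw [h]
    _ = p.1 z := q.apply_apply _

-- If `p` and `q` agree strictly inside the `p`-arc `(a, b)`, then `q` maps that interval to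
-- itself, so `q a ≠ b` would force the crossing `q b < a < b < q a`.
lemma apply_eq_of_forall_mem_Ioo (h : ∀ z, z < p.1 z ↔ z < q.1 z) {a : Fin (2 * k)}
    (ha : a < p.1 a) (inner : ∀ z ∈ Ioo a (p.1 a), q.1 z = p.1 z) : q.1 a = p.1 a := by
  set b := p.1 a with hb
  have stays_out : ∀ z ∉ Ioo a b, q.1 z ∉ Ioo a b := fun z hz hqz => hz <| by
    rw [← q.apply_apply z, inner _ hqz]
    exact p.apply_mem_Ioo hqz
  have hqa : b ≤ q.1 a := by
    by_contra! hlt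
    exact stays_out a (by simp) (mem_Ioo.mpr ⟨(h a).mp ha, hlt⟩)
  have hqb : q.1 b ≤ a := by
    have hb_closer : q.1 b < b := by
      rw [q.apply_lt_iff_not_lt_apply, ← h, hb, p.apply_apply]
      exact lt_asymm ha
    by_contra! hlt
    exact stays_out b (by simp) (mem_Ioo.mpr ⟨hlt, hb_closer⟩)
  by_contra hne
  have hqb_ne : q.1 b ≠ a := fun e => hne (by rw [← e, q.apply_apply])
  exact q.2.2.2 _ _ _ _ (hqb.lt_of_ne hqb_ne) ha (hqa.lt_of_ne (Ne.symm hne))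
    (q.apply_apply b) rfl

lemma ext_of_lt_apply_iff (h : ∀ z, z < p.1 z ↔ z < q.1 z) : p = q := by
  have openers : ∀ d a, (p.1 a : ℕ) - a = d → a < p.1 a → q.1 a = p.1 a := by
    intro d
    induction d using Nat.strong_induction_on with
    | _ d ih =>
    rintro a rfl ha
    refine p.apply_eq_of_forall_mem_Ioo q h ha fun z hz => ?_
    have hpz := mem_Ioo.mp (p.apply_mem_Ioo hz)
    rw [mem_Ioo] at hz
    rcases lt_or_gt_of_ne (p.apply_ne z) with hlt | hgt
    · refine p.apply_eq_of_apply_apply_eq q (ih _ ?_ _ rfl (by rwa [p.apply_apply]))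
      rw [p.apply_apply]
      omega
    · exact ih _ (by omega) z rfl hgt
  refine Subtype.ext (Equiv.ext fun z => ?_)
  rcases lt_or_gt_of_ne (p.apply_ne z) with hlt | hgt
  · exact (p.apply_eq_of_apply_apply_eq q (openers _ _ rfl (by rwa [p.apply_apply]))).symm
  · exact (openers _ z rfl hgt).symm

end Arcs

section DyckPath

variable (p q : NCPair k)

def arcSign (z : Fin (2 * k)) : ℤ := if z < q.1 z then 1 else -1

/-- The height of the Dyck path of `q` after step `i`. -/
def height (i : Fin (2 * k)) : ℤ := ∑ z ∈ Iic i, q.arcSign z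

def area : ℤ := ∑ i, q.height i

variable {p q}

lemma arcSign_eq_neg {z w : Fin (2 * k)} (h : w < q.1 w ↔ ¬ z < q.1 z) :
    q.arcSign w = -q.arcSign z := by
  unfold arcSign
  split_ifs <;> simp_all

lemma arcSign_eq_one {z : Fin (2 * k)} : q.arcSign z = 1 ↔ z < q.1 z := by
  unfold arcSign
  split_ifs <;> simp_all

lemma arcSign_le_one (z : Fin (2 * k)) : q.arcSign z ≤ 1 := by
  unfold arcSign
  split_ifs <;> norm_num

variable (q) in
lemma arcSign_apply (z : Fin (2 * k)) : q.arcSign (q.1 z) = -q.arcSign z :=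
  arcSign_eq_neg (by rw [q.apply_apply]; exact q.apply_lt_iff_not_lt_apply z)

-- The arcs of `p` inside `Iic i` contribute nothing, `q.arcSign` being odd along them.
lemma height_eq_sum_filter (hpq : ∀ z, q.arcSign (p.1 z) = -q.arcSign z)
    (i : Fin (2 * k)) : q.height i = ∑ z ∈ Iic i with i < p.1 z, q.arcSign z := by
  rw [height, sum_eq_sum_filter_apply_notMem p.2.1 p.2.2.1 hpq (Iic i)]
  simp only [mem_Iic, not_le]

variable (q) in
lemma height_eq_card (i : Fin (2 * k)) : q.height i = #{z ∈ Iic i | i < q.1 z} := by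
  rw [height_eq_sum_filter q.arcSign_apply, ← nsmul_one, ← sum_const]
  refine sum_congr rfl fun z hz => if_pos ?_
  obtain ⟨hzi, hiz⟩ := mem_filter.mp hz
  exact (mem_Iic.mp hzi).trans_lt hiz

lemma height_le (hpq : ∀ z, q.arcSign (p.1 z) = -q.arcSign z) (i : Fin (2 * k)) :
    q.height i ≤ p.height i := by
  rw [height_eq_sum_filter hpq, p.height_eq_card, ← nsmul_one]
  exact sum_le_card_nsmul _ _ _ fun z _ => arcSign_le_one z

lemma lt_apply_of_height_eq (hpq : ∀ z, q.arcSign (p.1 z) = -q.arcSign z) {z : Fin (2 * k)}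
    (heq : q.height z = p.height z) (hz : z < p.1 z) : z < q.1 z := by
  rw [height_eq_sum_filter hpq, p.height_eq_card, ← nsmul_one, ← sum_const] at heq
  have hall := (sum_eq_sum_iff_of_le fun z _ => arcSign_le_one z).mp heq z
    (mem_filter.mpr ⟨mem_Iic.mpr le_rfl, hz⟩)
  exact arcSign_eq_one.mp hall

lemma lt_apply_iff_of_height_eq (hpq : ∀ z, q.arcSign (p.1 z) = -q.arcSign z)
    (heq : ∀ i, q.height i = p.height i) (z : Fin (2 * k)) : z < p.1 z ↔ z < q.1 z := by
  refine ⟨lt_apply_of_height_eq hpq (heq z), fun hqz => ?_⟩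
  by_contra hpz
  have hpz' : p.1 z < p.1 (p.1 z) := by
    rw [p.apply_apply]
    exact (p.apply_lt_iff_not_lt_apply z).mpr hpz
  have h := hpq (p.1 z)
  rw [p.apply_apply, arcSign_eq_one.mpr hqz,
    arcSign_eq_one.mpr (lt_apply_of_height_eq hpq (heq _) hpz')] at h
  norm_num at h

lemma area_lt (hpq : ∀ z, q.arcSign (p.1 z) = -q.arcSign z) (hne : p ≠ q) :
    q.area < p.area := by
  refine (sum_le_sum fun i _ => height_le hpq i).lt_of_ne fun heq => hne ?_
  have hall := (sum_eq_sum_iff_of_le fun i _ => height_le hpq i).mp heq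
  exact ext_of_lt_apply_iff p q (lt_apply_iff_of_height_eq hpq fun i => hall i (mem_univ i))

end DyckPath

section Colouring

variable {p q : NCPair k}

-- The colour of `z` records whether `z` opens its `q`-arc, relative to the parity of `z`;
-- since arcs join points of opposite parity, it is constant on the arcs of `q`.
def colouring (hn : 2 ≤ n) (q : NCPair k) (z : Fin (2 * k)) : Fin n :=
  if (z < q.1 z ↔ Even (z : ℕ)) then ⟨0, by omega⟩ else ⟨1, hn⟩

lemma colouring_eq_colouring_iff (hn : 2 ≤ n) {z w : Fin (2 * k)} :
    colouring hn q w = colouring hn q z ↔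
      ((w < q.1 w ↔ Even (w : ℕ)) ↔ (z < q.1 z ↔ Even (z : ℕ))) := by
  unfold colouring
  split_ifs <;> simp_all [Fin.ext_iff]

lemma colouring_comp_self (hn : 2 ≤ n) (q : NCPair k) :
    colouring hn q ∘ q.1 = colouring hn q := by
  funext z
  rw [Function.comp_apply, colouring_eq_colouring_iff, q.apply_apply,
    q.apply_lt_iff_not_lt_apply, q.even_apply_iff]
  tauto

lemma arcSign_apply_of_colouring_comp (hn : 2 ≤ n) (h : colouring hn q ∘ p.1 = colouring hn q)
    (z : Fin (2 * k)) : q.arcSign (p.1 z) = -q.arcSign z := by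
  have hz := (colouring_eq_colouring_iff hn).mp (congrFun h z)
  rw [p.even_apply_iff] at hz
  exact arcSign_eq_neg (by tauto)

end Colouring

def arcIndicator (k n : ℕ) : Matrix (NCPair k) (Fin (2 * k) → Fin n) ℝ :=
  fun p f => if f ∘ p.1 = f then 1 else 0

lemma card_filter_comp_eq (p q : NCPair k) :
    #{f : Fin (2 * k) → Fin n | f ∘ p.1 = f ∧ f ∘ q.1 = f} = n ^ loops p q := by
  have h := natCard_invariantFun (Y := Fin n) ({p.1, q.1} : Set (Perm (Fin (2 * k))))
  simp only [Set.mem_insert_iff, Set.mem_singleton_iff, forall_eq_or_imp, forall_eq,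
    Nat.card_eq_fintype_card, Fintype.card_subtype, Fintype.card_fin] at h
  exact h

lemma gram_eq_arcIndicator_mul_conjTranspose :
    Gram k n = arcIndicator k n * (arcIndicator k n)ᴴ := by
  ext p q
  simp only [Gram, mul_apply, conjTranspose_apply, star_trivial, arcIndicator,
    ite_zero_mul_ite_zero, one_mul, sum_boole, card_filter_comp_eq, Nat.cast_pow]

-- Among the rows in the support of `c`, one of maximal area is the only one that is nonzero
-- at its own colouring.
lemma vecMul_arcIndicator_colouring (hn : 2 ≤ n) (c : NCPair k → ℝ) {q : NCPair k}
    (hmax : ∀ p, c p ≠ 0 → p.area ≤ q.area) :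
    (c ᵥ* arcIndicator k n) (colouring hn q) = c q := by
  rw [vecMul, dotProduct, sum_eq_single q]
  · simp [arcIndicator, colouring_comp_self]
  · intro p _ hpq
    simp only [arcIndicator, mul_ite, mul_one, mul_zero, ite_eq_right_iff]
    intro hp
    by_contra hcp
    exact not_lt_of_ge (hmax p hcp) (area_lt (arcSign_apply_of_colouring_comp hn hp) hpq)
  · simp

lemma arcIndicator_vecMul_injective (hn : 2 ≤ n) :
    Function.Injective (arcIndicator k n).vecMul := by
  refine (injective_iff_map_eq_zero (vecMulLinear (arcIndicator k n))).mpr fun c hc => ?_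
  by_contra hne
  obtain ⟨q, hq, hmax⟩ := exists_max_image {p | c p ≠ 0} area
    (filter_nonempty_iff.mpr (by simpa [funext_iff] using hne))
  have := congrFun hc (colouring hn q)
  rw [vecMulLinear_apply, vecMul_arcIndicator_colouring hn c
    (fun p hp => hmax p (by simpa using hp))] at this
  exact (mem_filter.mp hq).2 this

end NCPair

open NCPair in
theorem gram_posDef_general (k n : ℕ) (hn : 2 ≤ n) :
    (Gram k n).PosDef ∧ IsUnit (Gram k n) := by
  have h : (Gram k n).PosDef := gram_eq_arcIndicator_mul_conjTranspose ▸
    PosDef.mul_conjTranspose_self _ (arcIndicator_vecMul_injective hn)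
  exact ⟨h, h.isUnit⟩

/-- For k ≥ 1 and n ≥ 2, the Gram matrix G_{kn} is positive definite;
in particular it is invertible. -/
theorem gram_posDef (k n : ℕ) (hk : 1 ≤ k) (hn : 2 ≤ n) :
    (Gram k n).PosDef ∧ IsUnit (Gram k n) :=
  gram_posDef_general k n hn
end

section
/- For every k ∈ ℕ, every n ≥ 1 and all p, q ∈ D(k), the number of functions i : Fin (2k) → Fin n satisfying i ∘ p = i and i ∘ q = i equals n^{l(p,q)}; in other words, the Gram matrix entry G_{kn}(p,q) = n^{l(p,q)} is the scalar product of the delta functions associated to p and q. -/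
open scoped BigOperators

/-! A function invariant under `p` and `q` is invariant under the group they generate, so it is
the same as a function on the orbits of that group; there are `n ^ l(p,q)` such functions. -/

section InvariantFunctions

variable {G α β : Type*} [Group G] [MulAction G α]

theorem apply_smul_eq_of_mem_closure {S : Set G} {f : α → β}
    (hS : ∀ s ∈ S, ∀ x, f (s • x) = f x) {g : G} (hg : g ∈ Subgroup.closure S) (x : α) :
    f (g • x) = f x := by
  induction hg using Subgroup.closure_induction generalizing x with
  | mem s hs => exact hS s hs x
  | one => rw [one_smul]
  | mul a b _ _ ha hb => rw [mul_smul, ha, hb]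
  | inv a _ ha => rw [← ha (a⁻¹ • x), smul_inv_smul]

def invariantFunEquivOrbitQuotient (S : Set G) :
    {f : α → β // ∀ s ∈ S, ∀ x, f (s • x) = f x} ≃
      (MulAction.orbitRel.Quotient (Subgroup.closure S) α → β) where
  toFun f := Quotient.lift f.1 <| by
    rintro x y ⟨g, rfl⟩
    exact apply_smul_eq_of_mem_closure f.2 g.2 y
  invFun f := ⟨fun x => f (Quotient.mk'' x), fun s hs x =>
    congrArg f (Quotient.sound ⟨⟨s, Subgroup.subset_closure hs⟩, rfl⟩)⟩
  left_inv _ := rfl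
  right_inv f := funext fun x => Quotient.inductionOn x fun _ => rfl

end InvariantFunctions

theorem comp_eq_self_iff_forall_smul {α β : Type*} (i : α → β) (p q : Equiv.Perm α) :
    (i ∘ p = i ∧ i ∘ q = i) ↔ ∀ s ∈ ({p, q} : Set (Equiv.Perm α)), ∀ x, i (s • x) = i x := by
  simp [funext_iff, Equiv.Perm.smul_def]

theorem card_fixed_indices_general (k n : ℕ) (p q : NCPair k) :
    Fintype.card {i : Fin (2 * k) → Fin n // i ∘ p.1 = i ∧ i ∘ q.1 = i}
      = n ^ loops p q := by
  rw [← Nat.card_eq_fintype_card,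
    Nat.card_congr (Equiv.subtypeEquivRight fun i => comp_eq_self_iff_forall_smul i p.1 q.1),
    Nat.card_congr (invariantFunEquivOrbitQuotient _), Nat.card_fun, Nat.card_fin, loops]

/-- The number of multi-indices i : Fin (2k) → Fin n invariant under both p and q
equals n^{l(p,q)}: the Gram matrix entry is the scalar product of delta functions. -/
theorem card_fixed_indices (k n : ℕ) (hn : 1 ≤ n) (p q : NCPair k) :
    Fintype.card {i : Fin (2 * k) → Fin n // i ∘ p.1 = i ∧ i ∘ q.1 = i}
      = n ^ loops p q :=
  card_fixed_indices_general k n p q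
end

section
/- For every k ≥ 1 and every integer n ≥ 2, the family of vectors (δ_p)_{p ∈ D(k)} in the real vector space of functions (Fin (2k) → Fin n) → ℝ, where δ_p(i) = 1 if i ∘ p = i and δ_p(i) = 0 otherwise, is linearly independent. -/
open scoped BigOperators

/-- The delta function associated to a diagram p : δ_p(i) = 1 if i ∘ p = i, else 0. -/
noncomputable def deltaFun (k n : ℕ) (p : NCPair k) : (Fin (2 * k) → Fin n) → ℝ :=
  fun i => if i ∘ p.1 = i then 1 else 0

namespace TLaux

open Complex

variable {k : ℕ}

lemma pp (p : NCPair k) (x : Fin (2*k)) : p.1 (p.1 x) = x := p.2.1 x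
lemma pfix (p : NCPair k) (x : Fin (2*k)) : p.1 x ≠ x := p.2.2.1 x

lemma lt_or_lt (p : NCPair k) (a : Fin (2*k)) : a < p.1 a ∨ p.1 a < a := by
  rcases lt_or_gt_of_ne (pfix p a) with h | h
  · exact Or.inr h
  · exact Or.inl h

def openers (p : NCPair k) : Finset (Fin (2*k)) :=
  Finset.univ.filter (fun a => a < p.1 a)

lemma mem_openers {p : NCPair k} {a : Fin (2*k)} : a ∈ openers p ↔ a < p.1 a := by
  simp [openers]

lemma closer_not_opener (p : NCPair k) {a : Fin (2*k)} (h : a < p.1 a) :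
    ¬ (p.1 a < p.1 (p.1 a)) := by
  rw [pp]; exact not_lt.mpr h.le

lemma opener_of_closer (p : NCPair k) {a : Fin (2*k)} (h : ¬ a < p.1 a) :
    p.1 a < p.1 (p.1 a) := by
  rw [pp]; exact lt_of_le_of_ne (not_lt.mp h) (pfix p a)

/-- crossing helper: given a < b < c < d with p a = c, p b = d, contradiction. -/
lemma nc (p : NCPair k) {a b c d : Fin (2*k)} (h1 : a < b) (h2 : b < c) (h3 : c < d)
    (h4 : p.1 a = c) (h5 : p.1 b = d) : False := p.2.2.2 a b c d h1 h2 h3 h4 h5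

lemma helper_aux (p q : NCPair k) (h : ∀ a, a < p.1 a ↔ a < q.1 a)
    (c : Fin (2*k)) (hc : p.1 c < c)
    (hmin : ∀ y, y < c → p.1 y < y → p.1 y = q.1 y)
    (hlt : p.1 c < q.1 c) : False := by
  have hqc : q.1 c < c := by
    rcases lt_or_lt q c with h1 | h1
    · exact absurd ((h c).mpr h1) (not_lt.mpr hc.le)
    · exact h1
  -- a' := q.1 c is a q-opener and hence a p-opener
  have ha'q : q.1 c < q.1 (q.1 c) := by rw [pp]; exact hqc
  have ha'p : q.1 c < p.1 (q.1 c) := (h _).mpr ha'q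
  have hne : p.1 (q.1 c) ≠ c := by
    intro e
    have := congrArg p.1 e
    rw [pp] at this
    exact absurd this (ne_of_gt hlt)
  rcases lt_trichotomy (p.1 (q.1 c)) c with hy | hy | hy
  · -- y := p.1 (q.1 c) is a p-closer below c, so p and q agree there
    have hyc : p.1 (p.1 (q.1 c)) < p.1 (q.1 c) := by rw [pp]; exact ha'p
    have := hmin _ hy hyc
    -- p.1 y = q.1 c's ... : p.1 y = q.1 y with p.1 y = q.1 c
    have h1 : p.1 (p.1 (q.1 c)) = q.1 c := pp p _
    have h2 : q.1 (p.1 (q.1 c)) = q.1 c := by rw [← this, h1]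
    have := q.1.injective h2
    exact absurd this (ne_of_lt hy)
  · exact hne hy
  · -- crossing in p : p c = a < a' = q c < c < p a'
    exact nc p hlt hqc hy (pp p c) rfl

lemma eq_of_openers_eq (p q : NCPair k) (h : ∀ a, a < p.1 a ↔ a < q.1 a) : p = q := by
  by_contra hne
  have hne1 : ∃ x, p.1 x ≠ q.1 x := by
    by_contra h'
    push_neg at h'
    exact hne (Subtype.ext (Equiv.ext h'))
  classical
  set C : Finset (Fin (2*k)) :=
    Finset.univ.filter (fun c => p.1 c ≠ q.1 c ∧ p.1 c < c) with hC
  have hCne : C.Nonempty := by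
    obtain ⟨x, hx⟩ := hne1
    rcases lt_or_lt p x with h1 | h1
    · refine ⟨p.1 x, ?_⟩
      simp only [hC, Finset.mem_filter, Finset.mem_univ, true_and]
      constructor
      · intro e
        rw [pp] at e
        have := congrArg q.1 e
        rw [pp] at this
        exact hx this.symm
      · rw [pp]; exact h1
    · exact ⟨x, by simp [hC, hx, h1]⟩
  set c := C.min' hCne with hcdef
  have hcC : c ∈ C := C.min'_mem hCne
  simp only [hC, Finset.mem_filter, Finset.mem_univ, true_and] at hcC
  obtain ⟨hne2, hpc⟩ := hcC
  have hmin : ∀ y, y < c → p.1 y < y → p.1 y = q.1 y := by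
    intro y hy hpy
    by_contra hy'
    have : y ∈ C := by simp [hC, hy', hpy]
    exact absurd (C.min'_le y this) (not_le.mpr hy)
  have hqc : q.1 c < c := by
    rcases lt_or_lt q c with h1 | h1
    · exact absurd ((h c).mpr h1) (not_lt.mpr hpc.le)
    · exact h1
  have hmin' : ∀ y, y < c → q.1 y < y → q.1 y = p.1 y := by
    intro y hy hqy
    have hpy : p.1 y < y := by
      rcases lt_or_lt p y with h1 | h1
      · exact absurd ((h y).mp h1) (not_lt.mpr hqy.le)
      · exact h1
    exact (hmin y hy hpy).symm
  rcases lt_trichotomy (p.1 c) (q.1 c) with h1 | h1 | h1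
  · exact helper_aux p q h c hpc hmin h1
  · exact hne2 h1
  · exact helper_aux q p (fun a => (h a).symm) c hqc hmin' h1


noncomputable def wt (p : NCPair k) : ℕ := ∑ a ∈ openers p, (a : ℕ)

/-- If the q-openers form a transversal of p, and p ≠ q, then wt p < wt q. -/
lemma wt_lt (p q : NCPair k) (hpq : p ≠ q)
    (htr : ∀ a, a < p.1 a → ((a < q.1 a) ↔ ¬(p.1 a < q.1 (p.1 a)))) :
    wt p < wt q := by
  classical
  have htr' : ∀ a, (a < q.1 a) ↔ ¬(p.1 a < q.1 (p.1 a)) := by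
    intro a
    rcases lt_or_lt p a with h1 | h1
    · exact htr a h1
    · have h2 := htr (p.1 a) (opener_of_closer p (not_lt.mpr h1.le))
      rw [pp] at h2
      constructor
      · intro h3 h4
        exact (h2.mp h4) h3
      · intro h3
        by_contra h4
        exact h3 (h2.mpr h4)
  set ψ : Fin (2*k) → Fin (2*k) := fun a => if a < p.1 a then a else p.1 a with hψdef
  set χ : Fin (2*k) → Fin (2*k) := fun a => if a < q.1 a then a else p.1 a with hχdef
  have hψ1 : ∀ a, a < p.1 a → ψ a = a := fun a h => if_pos h
  have hψ2 : ∀ a, ¬ a < p.1 a → ψ a = p.1 a := fun a h => if_neg h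
  have hχ1 : ∀ a, a < q.1 a → χ a = a := fun a h => if_pos h
  have hχ2 : ∀ a, ¬ a < q.1 a → χ a = p.1 a := fun a h => if_neg h
  have hψmem : ∀ a, ψ a ∈ openers p := by
    intro a
    rw [mem_openers]
    by_cases h1 : a < p.1 a
    · rw [hψ1 a h1]; exact h1
    · rw [hψ2 a h1]; exact opener_of_closer p h1
  have hψle : ∀ a, ψ a ≤ a := by
    intro a
    by_cases h1 : a < p.1 a
    · rw [hψ1 a h1]
    · rw [hψ2 a h1]; exact (not_lt.mp h1)
  have key : ∑ a ∈ openers q, (ψ a : ℕ) = ∑ x ∈ openers p, (x : ℕ) := by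
    refine Finset.sum_nbij' (i := ψ) (j := χ) ?_ ?_ ?_ ?_ ?_
    · intro a _
      exact hψmem a
    · -- χ maps openers p into openers q
      intro x hx
      rw [mem_openers] at hx
      rw [mem_openers]
      by_cases h1 : x < q.1 x
      · rw [hχ1 x h1]; exact h1
      · rw [hχ2 x h1]
        by_contra h4
        exact h1 ((htr' x).mpr h4)
    · -- χ (ψ a) = a for a ∈ openers q
      intro a ha
      rw [mem_openers] at ha
      by_cases h1 : a < p.1 a
      · rw [hψ1 a h1, hχ1 a ha]
      · rw [hψ2 a h1]
        have h2 : ¬ (p.1 a < q.1 (p.1 a)) := (htr' a).mp ha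
        rw [hχ2 _ h2, pp]
    · -- ψ (χ x) = x for x ∈ openers p
      intro x hx
      rw [mem_openers] at hx
      by_cases h1 : x < q.1 x
      · rw [hχ1 x h1, hψ1 x hx]
      · rw [hχ2 x h1]
        have h2 : ¬ (p.1 x < p.1 (p.1 x)) := closer_not_opener p hx
        rw [hψ2 _ h2, pp]
    · intro a _
      rfl
  have hle : ∀ a ∈ openers q, (ψ a : ℕ) ≤ (a : ℕ) := fun a _ => hψle a
  have hex : ∃ a ∈ openers q, (ψ a : ℕ) < (a : ℕ) := by
    by_contra hno
    push_neg at hno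
    have heq : ∀ a ∈ openers q, ψ a = a := by
      intro a ha
      have h1 : (a : ℕ) ≤ (ψ a : ℕ) := hno a ha
      have h2 : (ψ a : ℕ) ≤ (a : ℕ) := hψle a
      exact Fin.ext (le_antisymm h2 h1)
    apply hpq
    apply eq_of_openers_eq
    intro a
    constructor
    · -- a p-opener → a q-opener
      intro h1
      by_contra h2
      -- then p.1 a is a q-opener
      have h3 : p.1 a < q.1 (p.1 a) := by
        by_contra h4
        exact h2 ((htr' a).mpr h4)
      have h5 : ψ (p.1 a) = p.1 a := heq (p.1 a) (mem_openers.mpr h3)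
      have h6 : ¬ (p.1 a < p.1 (p.1 a)) := closer_not_opener p h1
      rw [hψ2 _ h6, pp] at h5
      exact pfix p a h5.symm
    · -- a q-opener → a p-opener
      intro h1
      have h2 := heq a (mem_openers.mpr h1)
      by_cases h3 : a < p.1 a
      · exact h3
      · rw [hψ2 a h3] at h2
        exact absurd h2 (pfix p a)
  calc wt p = ∑ a ∈ openers q, (ψ a : ℕ) := key.symm
    _ < ∑ a ∈ openers q, (a : ℕ) := Finset.sum_lt_sum hle hex
    _ = wt q := rfl


noncomputable def uvec (n : ℕ) : Fin 2 → Fin n → ℂ := fun x v =>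
  if (v : ℕ) = 0 then 1 else if (v : ℕ) = 1 then (if x = 0 then I else -I) else 0

lemma uvec_pair {n : ℕ} (hn : 2 ≤ n) (x y : Fin 2) :
    ∑ v : Fin n, uvec n x v * uvec n y v = if x = y then 0 else 2 := by
  have h0 : (0 : ℕ) < n := by omega
  have h1 : (1 : ℕ) < n := by omega
  have hne : (⟨0, h0⟩ : Fin n) ≠ ⟨1, h1⟩ := by
    intro e
    have := congrArg Fin.val e
    simp at this
  have hs : ∑ v : Fin n, uvec n x v * uvec n y v
      = ∑ v ∈ ({⟨0, h0⟩, ⟨1, h1⟩} : Finset (Fin n)), uvec n x v * uvec n y v := by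
    refine (Finset.sum_subset (Finset.subset_univ _) ?_).symm
    intro v _ hv
    simp only [Finset.mem_insert, Finset.mem_singleton] at hv
    push_neg at hv
    obtain ⟨hv0, hv1⟩ := hv
    have hv0' : (v : ℕ) ≠ 0 := fun e => hv0 (Fin.ext e)
    have hv1' : (v : ℕ) ≠ 1 := fun e => hv1 (Fin.ext e)
    simp [uvec, hv0', hv1']
  rw [hs, Finset.sum_pair hne]
  simp only [uvec]
  fin_cases x <;> fin_cases y <;> simp <;> ring_nf <;>
    simp [Complex.I_sq] <;> ring

/-- Splitting a product over all of `Fin (2*k)` into a product over pairs. -/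
lemma prod_split (p : NCPair k) (h : Fin (2*k) → ℂ) :
    ∏ a, h a = ∏ a ∈ openers p, (h a * h (p.1 a)) := by
  classical
  rw [Finset.prod_mul_distrib]
  have h2 : ∏ a ∈ openers p, h (p.1 a) = ∏ a ∈ (openers p)ᶜ, h a := by
    refine Finset.prod_nbij' (i := p.1) (j := p.1) ?_ ?_ ?_ ?_ ?_
    · intro a ha
      rw [mem_openers] at ha
      rw [Finset.mem_compl, mem_openers]
      exact closer_not_opener p ha
    · intro a ha
      rw [Finset.mem_compl, mem_openers] at ha
      rw [mem_openers]
      exact opener_of_closer p ha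
    · intro a _; exact pp p a
    · intro a _; exact pp p a
    · intro a _; rfl
  rw [h2, Finset.prod_mul_prod_compl]


/-- Extend a coloring of the openers to a `p`-invariant coloring. -/
noncomputable def extman {n : ℕ} (p : NCPair k) (g : {a : Fin (2*k) // a < p.1 a} → Fin n) :
    Fin (2*k) → Fin n :=
  fun a => if h : a < p.1 a then g ⟨a, h⟩ else g ⟨p.1 a, opener_of_closer p h⟩

lemma extman_opener {n : ℕ} (p : NCPair k) (g : {a : Fin (2*k) // a < p.1 a} → Fin n)
    {a : Fin (2*k)} (h : a < p.1 a) : extman p g a = g ⟨a, h⟩ := dif_pos h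

lemma extman_closer {n : ℕ} (p : NCPair k) (g : {a : Fin (2*k) // a < p.1 a} → Fin n)
    {a : Fin (2*k)} (h : ¬ a < p.1 a) :
    extman p g a = g ⟨p.1 a, opener_of_closer p h⟩ := dif_neg h

lemma extman_fix {n : ℕ} (p : NCPair k) (g : {a : Fin (2*k) // a < p.1 a} → Fin n) :
    extman p g ∘ p.1 = extman p g := by
  funext a
  simp only [Function.comp_apply]
  by_cases h : a < p.1 a
  · rw [extman_opener p g h, extman_closer p g (closer_not_opener p h)]
    congr 1
    exact Subtype.ext (pp p a)
  · rw [extman_closer p g h, extman_opener p g (opener_of_closer p h)]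

lemma sum_delta {n : ℕ} (p : NCPair k) (j : Fin (2*k) → Fin 2) :
    ∑ i : Fin (2*k) → Fin n, (∏ a, uvec n (j a) (i a)) * ((deltaFun k n p i : ℝ) : ℂ)
      = ∏ a ∈ openers p, ∑ v : Fin n, uvec n (j a) v * uvec n (j (p.1 a)) v := by
  classical
  have step1 : ∑ i : Fin (2*k) → Fin n, (∏ a, uvec n (j a) (i a)) * ((deltaFun k n p i : ℝ) : ℂ)
      = ∑ i ∈ Finset.univ.filter (fun i : Fin (2*k) → Fin n => i ∘ p.1 = i),
          ∏ a, uvec n (j a) (i a) := by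
    rw [Finset.sum_filter]
    refine Finset.sum_congr rfl fun i _ => ?_
    by_cases h : i ∘ p.1 = i
    · simp [deltaFun, h]
    · simp [deltaFun, h]
  rw [step1]
  have step2 : ∑ i ∈ Finset.univ.filter (fun i : Fin (2*k) → Fin n => i ∘ p.1 = i),
        ∏ a, uvec n (j a) (i a)
      = ∑ g : {a : Fin (2*k) // a < p.1 a} → Fin n, ∏ a, uvec n (j a) (extman p g a) := by
    refine (Finset.sum_nbij' (i := extman p) (j := fun i t => i t.1) ?_ ?_ ?_ ?_ ?_).symm
    · intro g _
      rw [Finset.mem_filter]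
      exact ⟨Finset.mem_univ _, extman_fix p g⟩
    · intro i _
      exact Finset.mem_univ _
    · intro g _
      funext t
      exact extman_opener p g t.2
    · intro i hi
      rw [Finset.mem_filter] at hi
      funext a
      by_cases h : a < p.1 a
      · rw [extman_opener p _ h]
      · rw [extman_closer p _ h]
        exact congrFun hi.2 a
    · intro g _
      rfl
  rw [step2]
  have step3 : ∀ g : {a : Fin (2*k) // a < p.1 a} → Fin n,
      ∏ a, uvec n (j a) (extman p g a)
        = ∏ t : {a : Fin (2*k) // a < p.1 a},
            (uvec n (j t.1) (g t) * uvec n (j (p.1 t.1)) (g t)) := by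
    intro g
    rw [prod_split p]
    calc ∏ a ∈ openers p, (uvec n (j a) (extman p g a) * uvec n (j (p.1 a)) (extman p g (p.1 a)))
        = ∏ a ∈ openers p, (uvec n (j a) (extman p g a) * uvec n (j (p.1 a)) (extman p g a)) := by
          refine Finset.prod_congr rfl fun a ha => ?_
          have h := congrFun (extman_fix p g) a
          simp only [Function.comp_apply] at h
          rw [h]
      _ = ∏ t : {a : Fin (2*k) // a < p.1 a},
            (uvec n (j t.1) (extman p g t.1) * uvec n (j (p.1 t.1)) (extman p g t.1)) := by
          exact Finset.prod_subtype (openers p) (fun a => mem_openers)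
            (fun a => uvec n (j a) (extman p g a) * uvec n (j (p.1 a)) (extman p g a))
      _ = ∏ t : {a : Fin (2*k) // a < p.1 a},
            (uvec n (j t.1) (g t) * uvec n (j (p.1 t.1)) (g t)) := by
          refine Finset.prod_congr rfl fun t _ => ?_
          rw [extman_opener p g t.2]
  calc ∑ g : {a : Fin (2*k) // a < p.1 a} → Fin n, ∏ a, uvec n (j a) (extman p g a)
      = ∑ g : {a : Fin (2*k) // a < p.1 a} → Fin n,
          ∏ t : {a : Fin (2*k) // a < p.1 a},
            (uvec n (j t.1) (g t) * uvec n (j (p.1 t.1)) (g t)) := by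
        exact Finset.sum_congr rfl fun g _ => step3 g
    _ = ∏ t : {a : Fin (2*k) // a < p.1 a},
          ∑ v : Fin n, uvec n (j t.1) v * uvec n (j (p.1 t.1)) v := by
        rw [Finset.prod_univ_sum]
        rw [Fintype.piFinset_univ]
    _ = ∏ a ∈ openers p, ∑ v : Fin n, uvec n (j a) v * uvec n (j (p.1 a)) v := by
        exact (Finset.prod_subtype (openers p) (fun a => mem_openers)
          (fun a => ∑ v : Fin n, uvec n (j a) v * uvec n (j (p.1 a)) v)).symm


noncomputable def Amat (n : ℕ) (j : Fin (2*k) → Fin 2) (p : NCPair k) : ℂ :=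
  ∏ a ∈ openers p, (if j a = j (p.1 a) then (0:ℂ) else 2)

noncomputable def jq (q : NCPair k) : Fin (2*k) → Fin 2 :=
  fun a => if a < q.1 a then 0 else 1

lemma Amat_diag {n : ℕ} (q : NCPair k) : Amat n (jq q) q ≠ 0 := by
  unfold Amat
  rw [Finset.prod_ne_zero_iff]
  intro a ha
  rw [mem_openers] at ha
  have h1 : jq q a = 0 := if_pos ha
  have h2 : jq q (q.1 a) = 1 := if_neg (closer_not_opener q ha)
  rw [h1, h2]
  norm_num

lemma Amat_off {n : ℕ} (p q : NCPair k) (hpq : p ≠ q) (hA0 : Amat n (jq q) p ≠ 0) :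
    wt p < wt q := by
  apply wt_lt p q hpq
  intro a ha
  have h1 := Finset.prod_ne_zero_iff.mp hA0 a (mem_openers.mpr ha)
  have hne : jq q a ≠ jq q (p.1 a) := by
    intro e
    rw [if_pos e] at h1
    exact h1 rfl
  unfold jq at hne
  by_cases c1 : a < q.1 a <;> by_cases c2 : p.1 a < q.1 (p.1 a)
  · exact absurd (by rw [if_pos c1, if_pos c2]) hne
  · exact ⟨fun _ => c2, fun _ => c1⟩
  · exact ⟨fun h => absurd h c1, fun h => absurd c2 h⟩
  · exact absurd (by rw [if_neg c1, if_neg c2]) hne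

lemma Amat_eq {n : ℕ} (hn : 2 ≤ n) (j : Fin (2*k) → Fin 2) (p : NCPair k) :
    Amat n j p = ∑ i : Fin (2*k) → Fin n,
      (∏ a, uvec n (j a) (i a)) * ((deltaFun k n p i : ℝ) : ℂ) := by
  rw [sum_delta]
  refine Finset.prod_congr rfl fun a _ => ?_
  rw [uvec_pair hn]

end TLaux

/-- For k ≥ 1 and n ≥ 2, the delta functions (δ_p)_{p ∈ D(k)} are linearly independent. -/
theorem deltaFun_linearIndependent (k n : ℕ) (hk : 1 ≤ k) (hn : 2 ≤ n) :
    LinearIndependent ℝ (deltaFun k n) := by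
  classical
  rw [Fintype.linearIndependent_iff]
  intro c hc
  have hpt : ∀ i, ∑ p, c p * deltaFun k n p i = 0 := by
    intro i
    have h1 := congrFun hc i
    simpa [Finset.sum_apply] using h1
  have E : ∀ j : Fin (2 * k) → Fin 2, ∑ p, (c p : ℂ) * TLaux.Amat n j p = 0 := by
    intro j
    calc ∑ p, (c p : ℂ) * TLaux.Amat n j p
        = ∑ p, ∑ i : Fin (2 * k) → Fin n,
            (c p : ℂ) * ((∏ a, TLaux.uvec n (j a) (i a)) * ((deltaFun k n p i : ℝ) : ℂ)) := by
          refine Finset.sum_congr rfl fun p _ => ?_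
          rw [TLaux.Amat_eq hn j p, Finset.mul_sum]
      _ = ∑ i : Fin (2 * k) → Fin n, ∑ p,
            (c p : ℂ) * ((∏ a, TLaux.uvec n (j a) (i a)) * ((deltaFun k n p i : ℝ) : ℂ)) :=
          Finset.sum_comm
      _ = ∑ i : Fin (2 * k) → Fin n,
            (∏ a, TLaux.uvec n (j a) (i a)) * (((∑ p, c p * deltaFun k n p i : ℝ)) : ℂ) := by
          refine Finset.sum_congr rfl fun i _ => ?_
          push_cast
          rw [Finset.mul_sum]
          refine Finset.sum_congr rfl fun p _ => ?_
          ring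
      _ = 0 := by
          refine Finset.sum_eq_zero fun i _ => ?_
          rw [hpt i]
          simp
  have H : ∀ W, ∀ q, TLaux.wt q = W → c q = 0 := by
    intro W
    induction W using Nat.strong_induction_on with
    | _ W ih =>
      intro q hq
      have hE := E (TLaux.jq q)
      rw [Finset.sum_eq_single q] at hE
      · rcases mul_eq_zero.mp hE with h | h
        · exact_mod_cast h
        · exact absurd h (TLaux.Amat_diag q)
      · intro p _ hpq
        by_cases hA0 : TLaux.Amat n (TLaux.jq q) p = 0
        · rw [hA0, mul_zero]
        · have hlt := TLaux.Amat_off p q hpq hA0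
          rw [hq] at hlt
          rw [ih _ hlt p rfl]
          simp
      · intro h
        exact absurd (Finset.mem_univ q) h
  exact fun q => H _ q rfl
end

section
/- Fix k ≥ 1 and s ≥ 1. Then, as n → ∞ (n an integer, n ≥ max(2,s)), n^k · Tr(G_{kn}⁻¹ · G_{ks}) converges to s^k · catalan k. (Equivalently, the variable (n/s)^{1/2}(u₁₁+…+u_ss) in A_o(n) is asymptotically semicircular.) -/
open scoped BigOperators

/-! Write `Gram k n = n ^ k • A (1 / n)` with `A x p q = x ^ (k - loops p q)`. Every loop passes
through at least two points, and through three at a point where `p` and `q` differ, so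
`loops p q ≤ k` with equality exactly when `p = q`: `A` is a continuous matrix function with
`A 0 = 1`. Hence `n ^ k • (Gram k n)⁻¹ = (A (1 / n))⁻¹ → 1`, and the trace tends to
`Tr (Gram k s) = s ^ k * #D(k)`. Finally `#D(k) = catalan k`: splitting a pairing at the partner
`2j + 1` of the first point gives the Catalan recursion. -/

open MulAction Equiv Function
open scoped Pointwise

namespace MulAction

variable {G α : Type*} [Group G] [MulAction G α] [Finite α] {m : ℕ}

theorem card_eq_sum_card_orbit [Fintype (orbitRel.Quotient G α)] :
    Nat.card α = ∑ ω : orbitRel.Quotient G α, Nat.card (orbit G ω.out) := by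
  rw [Nat.card_congr (selfEquivSigmaOrbits G α), Nat.card_sigma]

theorem mul_card_orbitRel_quotient_le (h : ∀ x : α, m ≤ Nat.card (orbit G x)) :
    m * Nat.card (orbitRel.Quotient G α) ≤ Nat.card α := by
  have := Fintype.ofFinite (orbitRel.Quotient G α)
  have hm : m * Nat.card (orbitRel.Quotient G α) = ∑ _ω : orbitRel.Quotient G α, m := by
    simp [mul_comm]
  rw [hm, card_eq_sum_card_orbit (G := G)]
  exact Finset.sum_le_sum fun ω _ => h ω.out

theorem mul_card_orbitRel_quotient_lt (h : ∀ x : α, m ≤ Nat.card (orbit G x)) (x₀ : α)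
    (hx₀ : m < Nat.card (orbit G x₀)) :
    m * Nat.card (orbitRel.Quotient G α) < Nat.card α := by
  have := Fintype.ofFinite (orbitRel.Quotient G α)
  have hm : m * Nat.card (orbitRel.Quotient G α) = ∑ _ω : orbitRel.Quotient G α, m := by
    simp [mul_comm]
  rw [hm, card_eq_sum_card_orbit (G := G)]
  refine Finset.sum_lt_sum (fun ω _ => h ω.out) ⟨Quotient.mk'' x₀, Finset.mem_univ _, ?_⟩
  have hout : (Quotient.mk'' x₀ : orbitRel.Quotient G α).out ∈ orbit G x₀ :=
    Quotient.exact' (Quotient.out_eq' (Quotient.mk'' x₀ : orbitRel.Quotient G α))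
  rwa [orbit_eq_iff.mpr hout]

theorem mul_card_orbitRel_quotient_eq (h : ∀ x : α, Nat.card (orbit G x) = m) :
    m * Nat.card (orbitRel.Quotient G α) = Nat.card α := by
  have := Fintype.ofFinite (orbitRel.Quotient G α)
  simp [card_eq_sum_card_orbit (G := G), h, mul_comm]

end MulAction

section OrbitClosurePair

variable {α : Type*} {p q : Perm α} {x : α}

theorem mem_orbit_closure_pair_left :
    p x ∈ orbit (Subgroup.closure {p, q}) x :=
  ⟨⟨p, Subgroup.subset_closure (by simp)⟩, rfl⟩

theorem mem_orbit_closure_pair_right :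
    q x ∈ orbit (Subgroup.closure {p, q}) x :=
  ⟨⟨q, Subgroup.subset_closure (by simp)⟩, rfl⟩

theorem two_le_card_orbit_closure_pair [Finite α] (hpx : p x ≠ x) :
    2 ≤ Nat.card (orbit (Subgroup.closure {p, q}) x) := by
  rw [Nat.card_coe_set_eq, ← Set.ncard_pair hpx]
  exact Set.ncard_le_ncard (Set.pair_subset mem_orbit_closure_pair_left (mem_orbit_self x))

theorem three_le_card_orbit_closure_pair [Finite α] (hpx : p x ≠ x) (hqx : q x ≠ x)
    (hpq : p x ≠ q x) :
    3 ≤ Nat.card (orbit (Subgroup.closure {p, q}) x) := by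
  rw [Nat.card_coe_set_eq,
    ← Set.ncard_eq_three.mpr ⟨x, p x, q x, hpx.symm, hqx.symm, hpq, rfl⟩]
  exact Set.ncard_le_ncard (Set.insert_subset (mem_orbit_self x)
    (Set.pair_subset mem_orbit_closure_pair_left mem_orbit_closure_pair_right))

theorem card_orbit_closure_pair_self [Finite α] (hp : Involutive p) (hpx : p x ≠ x) :
    Nat.card (orbit (Subgroup.closure {p, p}) x) = 2 := by
  have hstab : Subgroup.closure {p, p} ≤ stabilizer (Perm α) ({x, p x} : Set α) := by
    rw [Subgroup.closure_le, Set.pair_eq_singleton, Set.singleton_subset_iff, SetLike.mem_coe,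
      mem_stabilizer_set]
    intro y
    simp only [Perm.smul_def, Set.mem_insert_iff, Set.mem_singleton_iff]
    constructor <;> rintro (h | h) <;> simp_all [hp.eq_iff]
  refine le_antisymm ?_ (two_le_card_orbit_closure_pair hpx)
  rw [Nat.card_coe_set_eq, ← Set.ncard_pair hpx.symm]
  refine Set.ncard_le_ncard ?_
  rintro _ ⟨g, rfl⟩
  exact (mem_stabilizer_set.mp (hstab g.2) x).mpr (Set.mem_insert x _)

end OrbitClosurePair

theorem loops_le {k : ℕ} (p q : NCPair k) : loops p q ≤ k := by
  have := mul_card_orbitRel_quotient_le (m := 2) fun x =>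
    two_le_card_orbit_closure_pair (q := q.1) (p.2.2.1 x)
  rw [Nat.card_fin] at this
  unfold loops
  omega

theorem loops_lt_of_ne {k : ℕ} {p q : NCPair k} (hpq : p ≠ q) : loops p q < k := by
  obtain ⟨x, hx⟩ : ∃ x, p.1 x ≠ q.1 x := by
    by_contra! h
    exact hpq (Subtype.ext (Equiv.ext h))
  have := mul_card_orbitRel_quotient_lt (m := 2)
    (fun x => two_le_card_orbit_closure_pair (q := q.1) (p.2.2.1 x)) x
    (three_le_card_orbit_closure_pair (p.2.2.1 x) (q.2.2.1 x) hx)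
  rw [Nat.card_fin] at this
  unfold loops
  omega

theorem loops_self {k : ℕ} (p : NCPair k) : loops p p = k := by
  have := mul_card_orbitRel_quotient_eq (m := 2) fun x =>
    card_orbit_closure_pair_self p.2.1 (p.2.2.1 x)
  rw [Nat.card_fin] at this
  unfold loops
  omega

/-- `NCPair k` is by definition `{p : Perm (Fin (2 * k)) // IsNCPairing p}`. -/
def IsNCPairing {α : Type*} [LinearOrder α] (p : Perm α) : Prop :=
  (∀ x, p (p x) = x) ∧ (∀ x, p x ≠ x) ∧
    ∀ a b c d : α, a < b → b < c → c < d → p a = c → p b = d → False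

namespace IsNCPairing

variable {α β : Type*} [LinearOrder α] [LinearOrder β] {p : Perm α}

theorem apply_mem_Ioo (hp : IsNCPairing p) {a x : α} (hax : a < x) (hxa : x < p a) :
    a < p x ∧ p x < p a := by
  have hne_a : p x ≠ a := fun h => hxa.ne (by rw [← h, hp.1])
  have hne_pa : p x ≠ p a := fun h => hax.ne' (p.injective h)
  refine ⟨lt_of_not_ge fun h => ?_, lt_of_not_ge fun h => ?_⟩
  · exact hp.2.2 (p x) a x (p a) (h.lt_of_ne hne_a) hax hxa (hp.1 x) rfl
  · exact hp.2.2 a x (p a) (p x) hax hxa (h.lt_of_ne' hne_pa) rfl rfl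

theorem lt_apply_of_lt (hp : IsNCPairing p) {a x : α} (ha : ∀ y, a ≤ y) (hx : p a < x) :
    p a < p x := by
  have hne_a : p x ≠ a := fun h => hx.ne (by rw [← h, hp.1])
  have hne_pa : p x ≠ p a := fun h => (ha (p a)).not_gt (p.injective h ▸ hx)
  refine lt_of_not_ge fun h => ?_
  exact hp.2.2 a (p x) (p a) x ((ha _).lt_of_ne hne_a.symm) (h.lt_of_ne hne_pa) hx rfl (hp.1 x)

theorem of_semiconj (e : β ↪o α) {q : Perm β} (h : Semiconj e q p) (hp : IsNCPairing p) :
    IsNCPairing q := by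
  refine ⟨fun y => e.injective ?_, fun y hy => hp.2.1 (e y) ?_,
    fun a b c d hab hbc hcd hac hbd => ?_⟩
  · rw [h.eq, h.eq, hp.1]
  · rw [← h.eq, hy]
  · exact hp.2.2 _ _ _ _ (e.strictMono hab) (e.strictMono hbc) (e.strictMono hcd)
      (by rw [← h.eq, hac]) (by rw [← h.eq, hbd])

theorem not_crossing_of_semiconj {q : Perm β} (hq : IsNCPairing q) (e : β ↪o α)
    (h : Semiconj e q p) {a b : β} (hab : e a < e b) (hbc : e b < p (e a))
    (hcd : p (e a) < p (e b)) : False := by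
  rw [← h.eq, ← h.eq] at *
  exact hq.2.2 a b (q a) (q b) (e.lt_iff_lt.mp hab) (e.lt_iff_lt.mp hbc) (e.lt_iff_lt.mp hcd)
    rfl rfl

end IsNCPairing

namespace Equiv.Perm

variable {α : Type*} [LinearOrder α] (s : Finset α) {n : ℕ} (hn : s.card = n)

def restrictToFin (p : Perm α) (hs : ∀ x, p x ∈ s ↔ x ∈ s) : Perm (Fin n) :=
  (s.orderIsoOfFin hn).symm.toEquiv.permCongr (p.subtypePerm hs)

theorem semiconj_restrictToFin (p : Perm α) (hs : ∀ x, p x ∈ s ↔ x ∈ s) :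
    Semiconj (s.orderEmbOfFin hn) (p.restrictToFin s hn hs) p := by
  intro y
  simp [restrictToFin, Equiv.permCongr_apply, ← Finset.coe_orderIsoOfFin_apply]

def extendFromFin (q : Perm (Fin n)) : Perm α :=
  q.extendDomain (s.orderIsoOfFin hn).toEquiv

theorem extendFromFin_apply_orderEmbOfFin (q : Perm (Fin n)) (y : Fin n) :
    q.extendFromFin s hn (s.orderEmbOfFin hn y) = s.orderEmbOfFin hn (q y) := by
  simp only [extendFromFin, ← Finset.coe_orderIsoOfFin_apply]
  exact extendDomain_apply_image q _ y

theorem extendFromFin_apply_of_notMem (q : Perm (Fin n)) {x : α} (hx : x ∉ s) :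
    q.extendFromFin s hn x = x :=
  extendDomain_apply_not_subtype q _ hx

end Equiv.Perm

namespace NCPair

variable {k : ℕ}

theorem isNCPairing (p : NCPair k) : IsNCPairing p.1 := p.2

theorem apply_mem_Ioo_iff (p : NCPair (k + 1)) (x : Fin (2 * (k + 1))) :
    p.1 x ∈ Finset.Ioo 0 (p.1 0) ↔ x ∈ Finset.Ioo 0 (p.1 0) := by
  have hmaps : ∀ y, 0 < y ∧ y < p.1 0 → 0 < p.1 y ∧ p.1 y < p.1 0 := fun y hy =>
    p.isNCPairing.apply_mem_Ioo hy.1 hy.2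
  simp only [Finset.mem_Ioo]
  exact ⟨fun h => p.2.1 x ▸ hmaps _ h, hmaps x⟩

theorem apply_mem_Ioi_iff (p : NCPair (k + 1)) (x : Fin (2 * (k + 1))) :
    p.1 x ∈ Finset.Ioi (p.1 0) ↔ x ∈ Finset.Ioi (p.1 0) := by
  have hmaps : ∀ y, p.1 0 < y → p.1 0 < p.1 y := fun y hy =>
    p.isNCPairing.lt_apply_of_lt Fin.zero_le hy
  simp only [Finset.mem_Ioi]
  exact ⟨fun h => p.2.1 x ▸ hmaps _ h, hmaps x⟩

variable (j : Fin (k + 1))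

def oddFin : Fin (2 * (k + 1)) := ⟨2 * j + 1, by omega⟩

theorem oddFin_injective : Injective (oddFin (k := k)) := fun i i' h => by
  simpa [oddFin, Fin.ext_iff] using h

theorem oddFin_pos : 0 < oddFin j := by
  rw [Fin.lt_def]
  simp [oddFin]

theorem card_Ioo_oddFin : (Finset.Ioo 0 (oddFin j)).card = 2 * j := by
  simp [Fin.card_Ioo, oddFin]

theorem card_Ioi_oddFin : (Finset.Ioi (oddFin j)).card = 2 * (k - j) := by
  simp only [Fin.card_Ioi, oddFin]
  omega

/-- `p` restricts to a fixed-point-free involution of the interval `(0, p 0)`, so this interval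
has even size. -/
theorem exists_apply_zero_eq_oddFin (p : NCPair (k + 1)) :
    ∃ j : Fin (k + 1), p.1 0 = oddFin j := by
  have hfree : ∀ x, p.1.subtypePerm (apply_mem_Ioo_iff p) x ≠ x := fun x h =>
    p.2.2.1 x (congrArg Subtype.val h)
  have hsq : p.1.subtypePerm (apply_mem_Ioo_iff p) ^ 2 ^ 1 = 1 := by
    ext x
    simp [sq, p.2.1]
  have heven : 2 ∣ (Finset.Ioo 0 (p.1 0)).card := by
    have := Fact.mk Nat.prime_two
    by_contra hodd
    rw [← Fintype.card_coe] at hodd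
    obtain ⟨x, hx⟩ := Perm.exists_fixed_point_of_prime hodd hsq
    exact hfree x hx
  rw [Fin.card_Ioo] at heven
  simp only [Fin.coe_ofNat_eq_mod, Nat.zero_mod, Nat.sub_zero] at heven
  have hpos := Fin.pos_iff_ne_zero.mpr (p.2.2.1 0)
  have hlt := (p.1 0).isLt
  refine ⟨⟨(p.1 0 : ℕ) / 2, by omega⟩, Fin.ext ?_⟩
  simp only [oddFin]
  omega

def innerEmb : Fin (2 * j) ↪o Fin (2 * (k + 1)) :=
  (Finset.Ioo 0 (oddFin j)).orderEmbOfFin (card_Ioo_oddFin j)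

def outerEmb : Fin (2 * (k - j)) ↪o Fin (2 * (k + 1)) :=
  (Finset.Ioi (oddFin j)).orderEmbOfFin (card_Ioi_oddFin j)

variable {j}

theorem innerEmb_mem (y : Fin (2 * j)) : 0 < innerEmb j y ∧ innerEmb j y < oddFin j :=
  Finset.mem_Ioo.mp (Finset.orderEmbOfFin_mem _ _ y)

theorem oddFin_lt_outerEmb (y : Fin (2 * (k - j))) : oddFin j < outerEmb j y :=
  Finset.mem_Ioi.mp (Finset.orderEmbOfFin_mem _ _ y)

theorem exists_innerEmb_eq {x : Fin (2 * (k + 1))} (h0 : 0 < x) (hx : x < oddFin j) :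
    ∃ y, innerEmb j y = x := by
  rw [← Set.mem_range, innerEmb, Finset.range_orderEmbOfFin]
  simp [h0, hx]

theorem exists_outerEmb_eq {x : Fin (2 * (k + 1))} (hx : oddFin j < x) :
    ∃ y, outerEmb j y = x := by
  rw [← Set.mem_range, outerEmb, Finset.range_orderEmbOfFin]
  simp [hx]

variable (j) in
theorem eq_zero_or_eq_oddFin_or_exists (x : Fin (2 * (k + 1))) :
    x = 0 ∨ x = oddFin j ∨ (∃ y, innerEmb j y = x) ∨ ∃ y, outerEmb j y = x := by
  rcases lt_trichotomy x (oddFin j) with h | h | h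
  · rcases (Fin.zero_le x).eq_or_lt with h0 | h0
    · exact Or.inl h0.symm
    · exact Or.inr (Or.inr (Or.inl (exists_innerEmb_eq h0 h)))
  · exact Or.inr (Or.inl h)
  · exact Or.inr (Or.inr (Or.inr (exists_outerEmb_eq h)))

variable (j) in
def glue (q₁ : Perm (Fin (2 * j))) (q₂ : Perm (Fin (2 * (k - j)))) : Perm (Fin (2 * (k + 1))) :=
  swap 0 (oddFin j) * q₁.extendFromFin _ (card_Ioo_oddFin j) *
    q₂.extendFromFin _ (card_Ioi_oddFin j)

variable (q₁ : Perm (Fin (2 * j))) (q₂ : Perm (Fin (2 * (k - j))))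

theorem glue_apply_zero : glue j q₁ q₂ 0 = oddFin j := by
  rw [glue, Perm.mul_apply, Perm.mul_apply,
    Perm.extendFromFin_apply_of_notMem (Finset.Ioi _) _ q₂ (by simp),
    Perm.extendFromFin_apply_of_notMem (Finset.Ioo _ _) _ q₁ (by simp), swap_apply_left]

theorem glue_apply_oddFin : glue j q₁ q₂ (oddFin j) = 0 := by
  rw [glue, Perm.mul_apply, Perm.mul_apply,
    Perm.extendFromFin_apply_of_notMem (Finset.Ioi _) _ q₂ (by simp),
    Perm.extendFromFin_apply_of_notMem (Finset.Ioo _ _) _ q₁ (by simp), swap_apply_right]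

theorem glue_apply_innerEmb (y : Fin (2 * j)) :
    glue j q₁ q₂ (innerEmb j y) = innerEmb j (q₁ y) := by
  have hy := innerEmb_mem y
  have hqy := innerEmb_mem (q₁ y)
  rw [glue, Perm.mul_apply, Perm.mul_apply,
    Perm.extendFromFin_apply_of_notMem (Finset.Ioi _) _ q₂ (by simpa using hy.2.le), innerEmb,
    Perm.extendFromFin_apply_orderEmbOfFin, ← innerEmb, swap_apply_of_ne_of_ne hqy.1.ne' hqy.2.ne]

theorem glue_apply_outerEmb (y : Fin (2 * (k - j))) :
    glue j q₁ q₂ (outerEmb j y) = outerEmb j (q₂ y) := by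
  have hqy := oddFin_lt_outerEmb (q₂ y)
  rw [glue, Perm.mul_apply, Perm.mul_apply, outerEmb, Perm.extendFromFin_apply_orderEmbOfFin,
    ← outerEmb, Perm.extendFromFin_apply_of_notMem (Finset.Ioo _ _) _ q₁
      (by simpa using fun _ => hqy.le),
    swap_apply_of_ne_of_ne ((Fin.zero_le _).trans_lt hqy).ne' hqy.ne']

variable {q₁ q₂}

theorem semiconj_glue_innerEmb : Semiconj (innerEmb j) q₁ (glue j q₁ q₂) :=
  fun y => (glue_apply_innerEmb q₁ q₂ y).symm

theorem semiconj_glue_outerEmb : Semiconj (outerEmb j) q₂ (glue j q₁ q₂) :=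
  fun y => (glue_apply_outerEmb q₁ q₂ y).symm

theorem isNCPairing_glue (hq₁ : IsNCPairing q₁) (hq₂ : IsNCPairing q₂) :
    IsNCPairing (glue j q₁ q₂) := by
  refine ⟨fun x => ?_, fun x => ?_, fun a b c d hab hbc hcd hac hbd => ?_⟩
  · rcases eq_zero_or_eq_oddFin_or_exists j x with rfl | rfl | ⟨y, rfl⟩ | ⟨y, rfl⟩ <;>
      simp [glue_apply_zero, glue_apply_oddFin, glue_apply_innerEmb, glue_apply_outerEmb,
        hq₁.1, hq₂.1]
  · rcases eq_zero_or_eq_oddFin_or_exists j x with rfl | rfl | ⟨y, rfl⟩ | ⟨y, rfl⟩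
    · simpa [glue_apply_zero] using (oddFin_pos (j := j)).ne'
    · simpa [glue_apply_oddFin] using (oddFin_pos (j := j)).ne
    · simpa [glue_apply_innerEmb] using hq₁.2.1 y
    · simpa [glue_apply_outerEmb] using hq₂.2.1 y
  subst hac hbd
  rcases eq_zero_or_eq_oddFin_or_exists j a with rfl | rfl | ⟨a, rfl⟩ | ⟨a, rfl⟩
  · rw [glue_apply_zero] at hbc hcd
    obtain ⟨b, rfl⟩ := exists_innerEmb_eq hab hbc
    rw [glue_apply_innerEmb] at hcd
    exact (innerEmb_mem _).2.not_gt hcd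
  · rw [glue_apply_oddFin] at hbc
    exact (Fin.zero_le b).not_gt hbc
  · obtain ⟨b, rfl⟩ := exists_innerEmb_eq ((innerEmb_mem a).1.trans hab)
      (hbc.trans (glue_apply_innerEmb q₁ q₂ a ▸ (innerEmb_mem _).2))
    exact hq₁.not_crossing_of_semiconj _ semiconj_glue_innerEmb hab hbc hcd
  · obtain ⟨b, rfl⟩ := exists_outerEmb_eq ((oddFin_lt_outerEmb a).trans hab)
    exact hq₂.not_crossing_of_semiconj _ semiconj_glue_outerEmb hab hbc hcd

def restrictInner (p : NCPair (k + 1)) (h0 : p.1 0 = oddFin j) : NCPair j :=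
  ⟨p.1.restrictToFin _ (card_Ioo_oddFin j) (h0 ▸ apply_mem_Ioo_iff p),
    p.isNCPairing.of_semiconj (innerEmb j) (Perm.semiconj_restrictToFin _ _ _ _)⟩

def restrictOuter (p : NCPair (k + 1)) (h0 : p.1 0 = oddFin j) : NCPair (k - j) :=
  ⟨p.1.restrictToFin _ (card_Ioi_oddFin j) (h0 ▸ apply_mem_Ioi_iff p),
    p.isNCPairing.of_semiconj (outerEmb j) (Perm.semiconj_restrictToFin _ _ _ _)⟩

theorem semiconj_restrictInner (p : NCPair (k + 1)) (h0 : p.1 0 = oddFin j) :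
    Semiconj (innerEmb j) (restrictInner p h0).1 p.1 :=
  Perm.semiconj_restrictToFin _ _ _ _

theorem semiconj_restrictOuter (p : NCPair (k + 1)) (h0 : p.1 0 = oddFin j) :
    Semiconj (outerEmb j) (restrictOuter p h0).1 p.1 :=
  Perm.semiconj_restrictToFin _ _ _ _

variable (j) in
def splitEquiv : {p : NCPair (k + 1) // p.1 0 = oddFin j} ≃ NCPair j × NCPair (k - j) where
  toFun p := (restrictInner p.1 p.2, restrictOuter p.1 p.2)
  invFun q := ⟨⟨glue j q.1.1 q.2.1, isNCPairing_glue q.1.2 q.2.2⟩, glue_apply_zero _ _⟩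
  left_inv := by
    rintro ⟨p, h0⟩
    refine Subtype.ext (Subtype.ext (Equiv.ext fun x => ?_))
    rcases eq_zero_or_eq_oddFin_or_exists j x with rfl | rfl | ⟨y, rfl⟩ | ⟨y, rfl⟩
    · exact (glue_apply_zero _ _).trans h0.symm
    · exact (glue_apply_oddFin _ _).trans ((p.2.1 0).symm.trans (congrArg p.1 h0))
    · exact (glue_apply_innerEmb _ _ y).trans (semiconj_restrictInner p h0 y)
    · exact (glue_apply_outerEmb _ _ y).trans (semiconj_restrictOuter p h0 y)
  right_inv := by
    rintro ⟨q₁, q₂⟩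
    refine Prod.ext (Subtype.ext (Equiv.ext fun y => (innerEmb j).injective ?_))
      (Subtype.ext (Equiv.ext fun y => (outerEmb j).injective ?_))
    · exact (semiconj_restrictInner _ (glue_apply_zero _ _) y).trans (glue_apply_innerEmb _ _ y)
    · exact (semiconj_restrictOuter _ (glue_apply_zero _ _) y).trans (glue_apply_outerEmb _ _ y)

theorem card_eq_sum_card_apply_zero_eq_oddFin (k : ℕ) :
    Fintype.card (NCPair (k + 1)) =
      ∑ j : Fin (k + 1), Fintype.card {p : NCPair (k + 1) // p.1 0 = oddFin j} := by
  have hfiber : ∀ m ∉ Finset.univ.map ⟨oddFin, oddFin_injective⟩,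
      Fintype.card {p : NCPair (k + 1) // p.1 0 = m} = 0 := by
    intro m hm
    rw [Fintype.card_eq_zero_iff]
    refine ⟨fun p => hm ?_⟩
    obtain ⟨j, hj⟩ := exists_apply_zero_eq_oddFin p.1
    exact Finset.mem_map.mpr ⟨j, Finset.mem_univ _, hj.symm.trans p.2⟩
  calc Fintype.card (NCPair (k + 1))
      = ∑ m, Fintype.card {p : NCPair (k + 1) // p.1 0 = m} := by
        rw [← Fintype.card_sigma]
        exact Fintype.card_congr (Equiv.sigmaFiberEquiv _).symm
    _ = ∑ m ∈ Finset.univ.map ⟨oddFin, oddFin_injective⟩,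
          Fintype.card {p : NCPair (k + 1) // p.1 0 = m} :=
        (Finset.sum_subset (Finset.subset_univ _) fun m _ hm => hfiber m hm).symm
    _ = _ := Finset.sum_map _ _ _

theorem card_eq_catalan (k : ℕ) : Fintype.card (NCPair k) = catalan k := by
  induction k using Nat.strong_induction_on with
  | _ k ih =>
    rcases k with _ | k
    · rw [catalan_zero, Fintype.card_eq_one_iff]
      exact ⟨⟨1, fun x => x.elim0, fun x => x.elim0, fun a => a.elim0⟩,
        fun p => Subtype.ext (Equiv.ext fun x => x.elim0)⟩
    · rw [card_eq_sum_card_apply_zero_eq_oddFin, catalan_succ]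
      refine Finset.sum_congr rfl fun j _ => ?_
      rw [Fintype.card_congr (splitEquiv j), Fintype.card_prod, ih _ (by omega), ih _ (by omega)]

end NCPair

open Filter Topology

theorem Matrix.inv_smul₀ {n K : Type*} [Fintype n] [DecidableEq n] [Field K]
    {c : K} (hc : c ≠ 0) (A : Matrix n n K) : (c • A)⁻¹ = c⁻¹ • A⁻¹ := by
  by_cases hA : IsUnit A.det
  · exact Matrix.inv_smul' A (Units.mk0 c hc) hA
  · have hcA : ¬IsUnit (c • A).det := by
      simpa [Matrix.det_smul, IsUnit.mul_iff, hc] using hA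
    rw [Matrix.nonsing_inv_apply_not_isUnit _ hA, Matrix.nonsing_inv_apply_not_isUnit _ hcA,
      smul_zero]

theorem Matrix.tendsto_inv_of_tendsto_one {ι n K : Type*} [Fintype n] [DecidableEq n]
    [Field K] [TopologicalSpace K] [IsTopologicalDivisionRing K] {l : Filter ι}
    {A : ι → Matrix n n K} (hA : Tendsto A l (𝓝 1)) :
    Tendsto (fun i => (A i)⁻¹) l (𝓝 1) := by
  have hinv : ContinuousAt Inv.inv (1 : Matrix n n K) :=
    continuousAt_matrix_inv _ (by simp [continuousAt_inv₀])
  have := hinv.tendsto.comp hA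
  rwa [inv_one] at this

noncomputable def normalizedGram (k : ℕ) (x : ℝ) : Matrix (NCPair k) (NCPair k) ℝ :=
  Matrix.of fun p q => x ^ loopDist p q

theorem continuous_normalizedGram (k : ℕ) : Continuous (normalizedGram k) :=
  continuous_pi fun _ => continuous_pi fun _ => continuous_pow _

theorem normalizedGram_zero (k : ℕ) : normalizedGram k 0 = 1 := by
  ext p q
  rcases eq_or_ne p q with rfl | hpq
  · simp [normalizedGram, loopDist, loops_self]
  · have : loopDist p q ≠ 0 := by
      have := loops_lt_of_ne hpq
      unfold loopDist
      omega
    simp [normalizedGram, hpq, this]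

theorem Gram_eq_smul_normalizedGram (k : ℕ) {n : ℕ} (hn : n ≠ 0) :
    Gram k n = ((n : ℝ) ^ k) • normalizedGram k (n : ℝ)⁻¹ := by
  ext p q
  have hloops : loops p q + loopDist p q = k := by
    have := loops_le p q
    unfold loopDist
    omega
  have hn' : (n : ℝ) ≠ 0 := Nat.cast_ne_zero.mpr hn
  simp only [Gram, normalizedGram, Matrix.smul_apply, Matrix.of_apply, smul_eq_mul, inv_pow]
  rw [eq_mul_inv_iff_mul_eq₀ (pow_ne_zero _ hn'), ← pow_add, hloops]

theorem trace_Gram (k s : ℕ) : (Gram k s).trace = (s : ℝ) ^ k * catalan k := by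
  simp [Matrix.trace, Gram, loops_self, NCPair.card_eq_catalan, mul_comm]

theorem trace_weingarten_gram_tendsto_general (k s : ℕ) :
    Filter.Tendsto (fun n : ℕ => (n : ℝ) ^ k * ((Gram k n)⁻¹ * Gram k s).trace)
      Filter.atTop (nhds ((s : ℝ) ^ k * catalan k)) := by
  have hnormalized : Tendsto (fun n : ℕ => normalizedGram k (n : ℝ)⁻¹) atTop (𝓝 1) :=
    normalizedGram_zero k ▸ ((continuous_normalizedGram k).tendsto 0).comp
      (tendsto_inv_atTop_zero.comp tendsto_natCast_atTop_atTop)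
  have htrace : Continuous fun B : Matrix (NCPair k) (NCPair k) ℝ => (B * Gram k s).trace :=
    (continuous_id.matrix_mul continuous_const).matrix_trace
  have hlim := (htrace.tendsto 1).comp (Matrix.tendsto_inv_of_tendsto_one hnormalized)
  rw [one_mul, trace_Gram] at hlim
  refine hlim.congr' ?_
  filter_upwards [eventually_ne_atTop 0] with n hn
  have hnk : (n : ℝ) ^ k ≠ 0 := pow_ne_zero _ (Nat.cast_ne_zero.mpr hn)
  rw [Function.comp_apply, Gram_eq_smul_normalizedGram k hn, Matrix.inv_smul₀ hnk,
    Matrix.smul_mul, Matrix.trace_smul, smul_eq_mul, mul_inv_cancel_left₀ hnk]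

/-- As n → ∞, n^k · Tr(G_{kn}⁻¹ G_{ks}) → s^k · catalan k :
the variable (n/s)^{1/2}(u₁₁+…+u_ss) is asymptotically semicircular. -/
theorem trace_weingarten_gram_tendsto (k s : ℕ) (hk : 1 ≤ k) (hs : 1 ≤ s) :
    Filter.Tendsto (fun n : ℕ => (n : ℝ) ^ k * ((Gram k n)⁻¹ * Gram k s).trace)
      Filter.atTop (nhds ((s : ℝ) ^ k * catalan k)) :=
  trace_weingarten_gram_tendsto_general k s
end

section
/- For every k ≥ 1 and all p, q ∈ D(k) with p ≠ q, one has d(p,q) = 1 if and only if the set {x ∈ Fin (2k) : p x ≠ q x} has exactly 4 elements, i.e., if and only if all strings of p and q are identical except two blocks of p and two blocks of q. -/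
open scoped BigOperators

/-! Where `p` and `q` agree at `x`, the loop through `x` is the single block `{x, p x}`. Where
they disagree, the set of disagreement points is stable under `p` and `q`, so the whole loop
consists of disagreement points, among them the four distinct points `x, p x, q x, q (p x)`.
With `a` loops of the first kind, `b` of the second and `D` disagreement points, `2k = 2a + D`,
`l = a + b` and `4b ≤ D`; hence `d = D/2 - b`, and `d = 1` forces `b = 1`, `D = 4`. -/

open Equiv Finset MulAction Pointwise Function

namespace Equiv.Perm

variable {α : Type*}

theorem smul_set_eq_of_involutive {σ : Perm α} {s : Set α} (hσ : Involutive σ)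
    (hs : ∀ x ∈ s, σ x ∈ s) : σ • s = s :=
  (Set.image_subset_iff.2 hs).antisymm fun x hx => ⟨σ x, hs x hx, hσ x⟩

theorem closure_pair_le_stabilizer {σ τ : Perm α} {s : Set α} (hσ : σ • s = s)
    (hτ : τ • s = s) : Subgroup.closure {σ, τ} ≤ stabilizer (Perm α) s :=
  (Subgroup.closure_le _).2 <| Set.insert_subset_iff.2 ⟨hσ, Set.singleton_subset_iff.2 hτ⟩

variable {σ τ : Perm α}

theorem orbit_closure_pair_subset {s : Set α} (hσ : Involutive σ) (hτ : Involutive τ)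
    (hσs : ∀ x ∈ s, σ x ∈ s) (hτs : ∀ x ∈ s, τ x ∈ s) {x : α} (hx : x ∈ s) :
    orbit (Subgroup.closure {σ, τ}) x ⊆ s := by
  rintro _ ⟨g, rfl⟩
  have hg := closure_pair_le_stabilizer (smul_set_eq_of_involutive hσ hσs)
    (smul_set_eq_of_involutive hτ hτs) g.2
  rw [← mem_stabilizer_iff.1 hg]
  exact Set.smul_mem_smul_set hx

theorem apply_eq_of_eq_apply_apply (hτ : Involutive τ) {x : α} (h : x = τ (σ x)) :
    σ x = τ x :=
  ((congrArg τ h).trans (hτ _)).symm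

theorem orbit_closure_pair_of_eq (hσ : Involutive σ) (hτ : Involutive τ) {x : α}
    (hx : σ x = τ x) : orbit (Subgroup.closure {σ, τ}) x = {x, σ x} := by
  refine subset_antisymm (orbit_closure_pair_subset hσ hτ ?_ ?_ (Set.mem_insert _ _)) ?_
  · rintro y (rfl | rfl)
    · simp
    · simp [hσ x]
  · rintro y (rfl | rfl)
    · simp [hx]
    · simp [hx, hτ x]
  · rintro y (rfl | rfl)
    · exact mem_orbit_self y
    · exact ⟨⟨σ, Subgroup.subset_closure (Set.mem_insert _ _)⟩, rfl⟩

theorem ne_of_mem_orbit_closure_pair (hσ : Involutive σ) (hτ : Involutive τ) {x y : α}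
    (hx : σ x ≠ τ x) (hy : y ∈ orbit (Subgroup.closure {σ, τ}) x) : σ y ≠ τ y := by
  refine orbit_closure_pair_subset (s := {y | σ y ≠ τ y}) hσ hτ ?_ ?_ hx hy
  · intro z hz h
    rw [hσ z] at h
    exact hz (apply_eq_of_eq_apply_apply hτ h)
  · intro z hz h
    rw [hτ z] at h
    exact hz (apply_eq_of_eq_apply_apply hσ h.symm).symm

theorem card_quadruple_eq_four [DecidableEq α] (hσ' : ∀ x, σ x ≠ x) (hτ : Involutive τ)
    (hτ' : ∀ x, τ x ≠ x) {x : α} (hx : σ x ≠ τ x) :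
    #{x, σ x, τ x, τ (σ x)} = 4 := by
  have hστ : x ≠ τ (σ x) := fun h => hx (apply_eq_of_eq_apply_apply hτ h)
  refine card_eq_four.2 ⟨_, _, _, _, (hσ' x).symm, (hτ' x).symm, hστ, hx, (hτ' _).symm,
    fun h => hσ' x (τ.injective h).symm, rfl⟩

variable (σ τ) in
abbrev orbitClass : α → orbitRel.Quotient (Subgroup.closure {σ, τ}) α := Quotient.mk''

theorem orbitClass_eq_iff {x y : α} :
    orbitClass σ τ y = orbitClass σ τ x ↔ y ∈ orbit (Subgroup.closure {σ, τ}) x :=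
  Quotient.eq''.trans orbitRel_apply

variable [Fintype α] [DecidableEq α]

open scoped Classical in
theorem card_filter_eq_eq_two_mul_card_image (hσ : Involutive σ) (hσ' : ∀ x, σ x ≠ x)
    (hτ : Involutive τ) :
    #{x | σ x = τ x} = 2 * #(({x | σ x = τ x} : Finset α).image (orbitClass σ τ)) := by
  rw [card_eq_sum_card_image (orbitClass σ τ), sum_const_nat (m := 2), mul_comm]
  simp only [mem_image, mem_filter, mem_univ, true_and, forall_exists_index, and_imp]
  rintro _ x hx rfl
  have : {y ∈ ({z | σ z = τ z} : Finset α) | orbitClass σ τ y = orbitClass σ τ x} =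
      {x, σ x} := by
    ext y
    simp only [mem_filter, mem_univ, true_and, orbitClass_eq_iff,
      orbit_closure_pair_of_eq hσ hτ hx, mem_insert, mem_singleton]
    refine ⟨And.right, fun hy => ⟨?_, hy⟩⟩
    rcases hy with rfl | rfl
    · exact hx
    · rw [hσ, hx, hτ]
  rw [this, card_pair (hσ' x).symm]

open scoped Classical in
theorem four_mul_card_image_le_card_filter_ne (hσ : Involutive σ) (hσ' : ∀ x, σ x ≠ x)
    (hτ : Involutive τ) (hτ' : ∀ x, τ x ≠ x) :
    4 * #(({x | σ x ≠ τ x} : Finset α).image (orbitClass σ τ)) ≤ #{x | σ x ≠ τ x} := by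
  refine mul_card_image_le_card _ 4 ?_
  simp only [mem_image, mem_filter, mem_univ, true_and, forall_exists_index, and_imp]
  rintro _ x hx rfl
  rw [← card_quadruple_eq_four hσ' hτ hτ' hx]
  refine card_le_card fun y hy => ?_
  have hσG : σ ∈ Subgroup.closure {σ, τ} := Subgroup.subset_closure (Set.mem_insert _ _)
  have hτG : τ ∈ Subgroup.closure {σ, τ} :=
    Subgroup.subset_closure (Set.mem_insert_of_mem _ rfl)
  have hyx : y ∈ orbit (Subgroup.closure {σ, τ}) x := by
    simp only [mem_insert, mem_singleton] at hy
    rcases hy with rfl | rfl | rfl | rfl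
    · exact mem_orbit_self y
    · exact mem_orbit x (⟨σ, hσG⟩ : Subgroup.closure {σ, τ})
    · exact mem_orbit x (⟨τ, hτG⟩ : Subgroup.closure {σ, τ})
    · exact mem_orbit x (⟨τ * σ, Subgroup.mul_mem _ hτG hσG⟩ : Subgroup.closure {σ, τ})
  simp only [mem_filter, mem_univ, true_and, orbitClass_eq_iff]
  exact ⟨ne_of_mem_orbit_closure_pair hσ hτ hx hyx, hyx⟩

open scoped Classical in
theorem card_orbitRel_quotient_eq_card_image_add_card_image (hσ : Involutive σ)
    (hτ : Involutive τ) :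
    Nat.card (orbitRel.Quotient (Subgroup.closure {σ, τ}) α) =
      #(({x | σ x = τ x} : Finset α).image (orbitClass σ τ)) +
        #(({x | σ x ≠ τ x} : Finset α).image (orbitClass σ τ)) := by
  rw [Nat.card_eq_fintype_card, ← card_univ, ← card_union_of_disjoint, ← image_union,
    filter_union_filter_not_eq, image_univ_of_surjective Quotient.mk''_surjective]
  simp only [disjoint_left, mem_image, mem_filter, mem_univ, true_and, not_exists, not_and,
    forall_exists_index, and_imp]
  rintro _ x hx rfl y hy hyx
  exact ne_of_mem_orbit_closure_pair hσ hτ hy (orbitClass_eq_iff.1 hyx.symm) hx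

theorem card_eq_two_mul_card_orbitRel_quotient_add_two_iff (hσ : Involutive σ)
    (hσ' : ∀ x, σ x ≠ x) (hτ : Involutive τ) (hτ' : ∀ x, τ x ≠ x) :
    Fintype.card α = 2 * Nat.card (orbitRel.Quotient (Subgroup.closure {σ, τ}) α) + 2 ↔
      #{x | σ x ≠ τ x} = 4 := by
  classical
  have hsplit : #{x | σ x = τ x} + #{x | σ x ≠ τ x} = Fintype.card α :=
    card_filter_add_card_filter_not _
  have hagree := card_filter_eq_eq_two_mul_card_image hσ hσ' hτ
  have hdisagree := four_mul_card_image_le_card_filter_ne hσ hσ' hτ hτ'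
  have hquot := card_orbitRel_quotient_eq_card_image_add_card_image hσ hτ
  have hempty : #(({x | σ x ≠ τ x} : Finset α).image (orbitClass σ τ)) = 0 →
      #{x | σ x ≠ τ x} = 0 := by
    simp only [card_eq_zero, image_eq_empty, imp_self]
  omega

end Equiv.Perm

theorem loopDist_eq_one_iff_general (k : ℕ) (p q : NCPair k) :
    loopDist p q = 1 ↔
      (Finset.univ.filter (fun x : Fin (2 * k) => p.1 x ≠ q.1 x)).card = 4 := by
  have h := Perm.card_eq_two_mul_card_orbitRel_quotient_add_two_iff p.2.1 p.2.2.1 q.2.1 q.2.2.1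
  rw [Fintype.card_fin] at h
  rw [← h, loopDist, loops]
  omega

/-- For p ≠ q in D(k), d(p,q) = 1 iff p and q differ in exactly 4 points,
i.e. all strings of p and q are identical except two blocks of each. -/
theorem loopDist_eq_one_iff (k : ℕ) (hk : 1 ≤ k) (p q : NCPair k) (hpq : p ≠ q) :
    loopDist p q = 1 ↔
      (Finset.univ.filter (fun x : Fin (2 * k) => p.1 x ≠ q.1 x)).card = 4 :=
  loopDist_eq_one_iff_general k p q
end

section
/- For every real number z with |z| < 1/2, the generating series of the Catalan numbers satisfies ∑_{k=0}^∞ catalan k · z^{2k} = 2 / (1 + √(1 − 4z²)). -/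
/-!
Put `S = ∑ catalan k * x ^ k` for `|x| ≤ 1/4`. The partial sums at `x = 1/4` telescope to
`2 - 2 * centralBinom n / 4 ^ n`, so the series converges absolutely with `|S| ≤ 2`. The Catalan
recursion is a Cauchy product, giving `x * S ^ 2 + 1 = S`, i.e. `(1 - 2 * x * S) ^ 2 = 1 - 4 * x`.
The bound `|S| ≤ 2` makes `1 - 2 * x * S` nonnegative, so it equals `√(1 - 4 * x)`, and then
`S * (1 + √(1 - 4 * x)) = 2`.
-/

open Finset

lemma sum_range_catalan_div_four_pow (n : ℕ) :
    ∑ k ∈ range n, (catalan k : ℝ) / 4 ^ k = 2 - 2 * n.centralBinom / 4 ^ n := by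
  induction n with
  | zero => simp
  | succ n ih =>
    have hcat : ((n : ℝ) + 1) * catalan n = n.centralBinom := by
      exact_mod_cast succ_mul_catalan_eq_centralBinom n
    have hbinom : ((n : ℝ) + 1) * (n + 1).centralBinom = 2 * (2 * n + 1) * n.centralBinom := by
      exact_mod_cast n.succ_mul_centralBinom_succ
    have hrec : 4 * (catalan n : ℝ) = 8 * n.centralBinom - 2 * (n + 1).centralBinom :=
      mul_left_cancel₀ n.cast_add_one_ne_zero (by linear_combination 4 * hcat + 2 * hbinom)
    rw [sum_range_succ, ih, pow_succ]
    field_simp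
    linear_combination hrec

lemma sum_range_catalan_mul_pow_le_two {x : ℝ} (hx₀ : 0 ≤ x) (hx : x ≤ 1 / 4) (n : ℕ) :
    ∑ k ∈ range n, (catalan k : ℝ) * x ^ k ≤ 2 :=
  calc ∑ k ∈ range n, (catalan k : ℝ) * x ^ k
      ≤ ∑ k ∈ range n, (catalan k : ℝ) / 4 ^ k := by
        gcongr with k
        rw [div_eq_mul_inv, ← inv_pow, ← one_div]
        gcongr
    _ = 2 - 2 * n.centralBinom / 4 ^ n := sum_range_catalan_div_four_pow n
    _ ≤ 2 := sub_le_self _ (by positivity)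

section

variable {x : ℝ}

lemma summable_norm_catalan_mul_pow (hx : |x| ≤ 1 / 4) :
    Summable fun k => ‖(catalan k : ℝ) * x ^ k‖ := by
  simp only [norm_mul, norm_pow, Real.norm_eq_abs, Nat.abs_cast]
  exact summable_of_sum_range_le (fun k => by positivity)
    (sum_range_catalan_mul_pow_le_two (abs_nonneg x) hx)

lemma abs_tsum_catalan_mul_pow_le_two (hx : |x| ≤ 1 / 4) :
    |∑' k, (catalan k : ℝ) * x ^ k| ≤ 2 := by
  refine (norm_tsum_le_tsum_norm (summable_norm_catalan_mul_pow hx)).trans ?_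
  simp only [norm_mul, norm_pow, Real.norm_eq_abs, Nat.abs_cast]
  exact Real.tsum_le_of_sum_range_le (fun k => by positivity)
    (sum_range_catalan_mul_pow_le_two (abs_nonneg x) hx)

lemma catalan_mul_pow_succ_eq_sum_antidiagonal (n : ℕ) :
    (catalan (n + 1) : ℝ) * x ^ (n + 1)
      = x * ∑ ij ∈ antidiagonal n, (catalan ij.1 * x ^ ij.1) * (catalan ij.2 * x ^ ij.2) := by
  have hterm : ∀ ij ∈ antidiagonal n, ((catalan ij.1 : ℝ) * x ^ ij.1) * (catalan ij.2 * x ^ ij.2)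
      = ((catalan ij.1 * catalan ij.2 : ℕ) : ℝ) * x ^ n := by
    rintro ⟨i, j⟩ hij
    rw [Finset.HasAntidiagonal.mem_antidiagonal] at hij
    subst hij
    push_cast
    ring
  rw [sum_congr rfl hterm, ← sum_mul, ← Nat.cast_sum, ← catalan_succ', pow_succ]
  ring

lemma tsum_catalan_mul_pow_quadratic (hx : |x| ≤ 1 / 4) :
    x * (∑' k, (catalan k : ℝ) * x ^ k) ^ 2 + 1 = ∑' k, (catalan k : ℝ) * x ^ k := by
  have hf := summable_norm_catalan_mul_pow hx
  conv_rhs =>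
    rw [hf.of_norm.tsum_eq_zero_add, tsum_congr catalan_mul_pow_succ_eq_sum_antidiagonal,
      tsum_mul_left, ← tsum_mul_tsum_eq_tsum_sum_antidiagonal_of_summable_norm hf hf]
  simp only [catalan_zero, Nat.cast_one, pow_zero, mul_one]
  ring

lemma eq_two_div_one_add_sqrt_of_quadratic {S : ℝ} (hx : |x| ≤ 1 / 4) (hS : |S| ≤ 2)
    (hquad : x * S ^ 2 + 1 = S) : S = 2 / (1 + √(1 - 4 * x)) := by
  have hxS : |2 * x * S| ≤ 1 := by
    rw [abs_mul, abs_mul, abs_two]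
    nlinarith [abs_nonneg x, abs_nonneg S]
  have hsqrt : √(1 - 4 * x) = 1 - 2 * x * S := by
    rw [Real.sqrt_eq_iff_eq_sq (by linarith [(abs_le.mp hx).2]) (by linarith [(abs_le.mp hxS).2])]
    linear_combination -4 * x * hquad
  rw [hsqrt, eq_div_iff (by linarith [(abs_le.mp hxS).2])]
  linear_combination -2 * hquad

theorem hasSum_catalan_mul_pow (hx : |x| ≤ 1 / 4) :
    HasSum (fun k => (catalan k : ℝ) * x ^ k) (2 / (1 + √(1 - 4 * x))) := by
  rw [← eq_two_div_one_add_sqrt_of_quadratic hx (abs_tsum_catalan_mul_pow_le_two hx)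
    (tsum_catalan_mul_pow_quadratic hx)]
  exact (summable_norm_catalan_mul_pow hx).of_norm.hasSum

end

/-- For |z| < 1/2, the generating series of the Catalan numbers satisfies
∑_{k=0}^∞ catalan k · z^{2k} = 2 / (1 + √(1 − 4z²)). -/
theorem catalan_generating_series (z : ℝ) (hz : |z| < 1 / 2) :
    HasSum (fun k : ℕ => (catalan k : ℝ) * z ^ (2 * k))
      (2 / (1 + Real.sqrt (1 - 4 * z ^ 2))) := by
  have hz2 : |z ^ 2| ≤ 1 / 4 := by
    rw [abs_pow]
    nlinarith [abs_nonneg z]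
  simpa only [pow_mul] using hasSum_catalan_mul_pow hz2
end
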